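/- arXiv:1711.09402 — 10 statements merged into one kernel-verified Lean document; each statement's English description precedes it below -/
import Mathlib

section
/- Let k be a commutative ℚ-algebra, V a k-module and n ≥ 2 an integer. Then the kernel of the symmetrization operator π_n acting on V^{⊗n} is equal to the sum, over 1 ≤ i ≤ n − 1, of the images of the operators id − τ_i on V^{⊗n}; in particular, the image of each operator id − τ_i is contained in the kernel of π_n. -/
open scoped TensorProduct

/-- The action of a permutation `σ ∈ S_n` on the `n`-th tensor power `V^{⊗n}`, permuting the
tensor factors. -/
noncomputable def permAction (k : Type*) [CommRing k] (V : Type*) [AddCommGroup V] [Module k V]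
    (n : ℕ) (σ : Equiv.Perm (Fin n)) : (⨂[k]^n V) →ₗ[k] (⨂[k]^n V) :=
  (PiTensorProduct.reindex k (fun _ : Fin n => V) σ).toLinearMap

section aux
variable (k : Type*) [CommRing k] (V : Type*) [AddCommGroup V] [Module k V] (n : ℕ)

lemma permAction_mul (σ τ : Equiv.Perm (Fin n)) :
    permAction k V n (σ * τ) = (permAction k V n σ) ∘ₗ (permAction k V n τ) := by
  have := PiTensorProduct.reindex_trans (R := k) (s := fun _ : Fin n => V) (τ : Fin n ≃ Fin n) σ
  rw [permAction, Equiv.Perm.mul_def, ← this]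
  rfl

lemma permAction_one : permAction k V n 1 = LinearMap.id := by
  have := PiTensorProduct.reindex_refl (R := k) (s := fun _ : Fin n => V)
  rw [permAction, Equiv.Perm.one_def, this]
  rfl

lemma sum_permAction_comp (τ : Equiv.Perm (Fin n)) (x : ⨂[k]^n V) :
    (∑ σ : Equiv.Perm (Fin n), permAction k V n σ) (permAction k V n τ x)
      = (∑ σ : Equiv.Perm (Fin n), permAction k V n σ) x := by
  simp only [LinearMap.sum_apply]
  refine Fintype.sum_equiv (Equiv.mulRight τ) _ _ fun σ => ?_
  show permAction k V n σ (permAction k V n τ x) = permAction k V n (σ * τ) x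
  rw [permAction_mul]; rfl

end aux

/-- Let `k` be a commutative `ℚ`-algebra, `V` a `k`-module and `n ≥ 2` an
integer (`n = m + 2`).  The kernel of the symmetrization operator `π_n = (n!)⁻¹ Σ_{σ ∈ S_n} σ`
acting on `V^{⊗n}` equals the sum, over `1 ≤ i ≤ n − 1`, of the images of the operators
`id − τ_i`, where `τ_i` exchanges the `i`-th and `(i+1)`-th tensor factors. -/
theorem stmt_3 (k : Type*) [CommRing k] [Algebra ℚ k] (V : Type*) [AddCommGroup V] [Module k V]
    (m : ℕ) :
    LinearMap.ker
        (algebraMap ℚ k ((Nat.factorial (m + 2) : ℚ)⁻¹) •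
          ∑ σ : Equiv.Perm (Fin (m + 2)), permAction k V (m + 2) σ) =
      ⨆ i : Fin (m + 1),
        LinearMap.range
          (LinearMap.id - permAction k V (m + 2) (Equiv.swap i.castSucc i.succ)) := by
  set n := m + 2
  set c : k := algebraMap ℚ k ((Nat.factorial n : ℚ)⁻¹) with hc
  set P := ∑ σ : Equiv.Perm (Fin n), permAction k V n σ with hP
  set S := ⨆ i : Fin (m + 1),
      LinearMap.range (LinearMap.id - permAction k V n (Equiv.swap i.castSucc i.succ)) with hS
  have key : ∀ σ : Equiv.Perm (Fin n), ∀ x : ⨂[k]^n V, x - permAction k V n σ x ∈ S := by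
    intro σ
    have hσ : σ ∈ Submonoid.closure
        (Set.range fun i : Fin (m + 1) => Equiv.swap i.castSucc i.succ) := by
      rw [Equiv.Perm.mclosure_swap_castSucc_succ]; trivial
    induction hσ using Submonoid.closure_induction with
    | mem σ h =>
      obtain ⟨i, rfl⟩ := h
      intro x
      exact le_iSup (fun i : Fin (m+1) => LinearMap.range
        (LinearMap.id - permAction k V n (Equiv.swap i.castSucc i.succ))) i ⟨x, by simp⟩
    | one => intro x; rw [permAction_one]; simp
    | mul σ τ _ _ hσ hτ =>
      intro x
      have : x - permAction k V n (σ * τ) x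
          = (x - permAction k V n τ x)
            + (permAction k V n τ x - permAction k V n σ (permAction k V n τ x)) := by
        rw [permAction_mul, LinearMap.comp_apply]; abel
      rw [this]
      exact S.add_mem (hτ x) (hσ _)
  have hcfact : c * (Nat.factorial n : k) = 1 := by
    rw [hc, show ((Nat.factorial n : k)) = algebraMap ℚ k (Nat.factorial n : ℚ) by
      simp, ← map_mul, inv_mul_cancel₀ (by exact_mod_cast Nat.factorial_ne_zero n), map_one]
  apply le_antisymm
  · intro x hx
    rw [LinearMap.mem_ker, LinearMap.smul_apply] at hx
    have hx' : x = c • ∑ σ : Equiv.Perm (Fin n), (x - permAction k V n σ x) := by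
      rw [Finset.sum_sub_distrib, smul_sub, ← LinearMap.sum_apply, ← hP, hx, sub_zero,
        Finset.sum_const, Finset.card_univ, Fintype.card_perm, Fintype.card_fin,
        ← Nat.cast_smul_eq_nsmul k, smul_smul, hcfact, one_smul]
    rw [hx']
    exact S.smul_mem c (Submodule.sum_mem S fun σ _ => key σ x)
  · rw [hS]
    refine iSup_le fun i => ?_
    rintro _ ⟨y, rfl⟩
    rw [LinearMap.mem_ker, LinearMap.smul_apply, LinearMap.sub_apply, LinearMap.id_apply,
      map_sub, sum_permAction_comp, sub_self, smul_zero]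
end

section
/- Let k be a field of characteristic zero, V a k-vector space, and α : V ⊗ V → V a k-linear map satisfying α(a ⊗ b) = −α(b ⊗ a) for all a, b ∈ V. Then α satisfies the Jacobi identity, i.e. α(α(a ⊗ b) ⊗ c) + α(α(b ⊗ c) ⊗ a) + α(α(c ⊗ a) ⊗ b) = 0 for all a, b, c ∈ V, if and only if there exists a k-linear map β : V ⊗ V ⊗ V → V such that for all a, b, c ∈ V one has β(a⊗b⊗c − b⊗a⊗c) = 2·α(α(a⊗b)⊗c) and β(a⊗b⊗c − a⊗c⊗b) = 2·α(a⊗α(b⊗c)). -/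
/-!
Write `[x, y]` for `α (x ⊗ y)`. With `[·,·]` antisymmetric, the Jacobi identity is equivalent to
each of the Leibniz rules `[a, [b, c]] - [b, [a, c]] = [[a, b], c]` and
`[[a, b], c] - [[a, c], b] = [a, [b, c]]`. Hence `β (a ⊗ b ⊗ c) = [[a, b], c] + [a, [b, c]]` sends
`a⊗b⊗c − b⊗a⊗c` to `3 [[a, b], c]` and `a⊗b⊗c − a⊗c⊗b` to `3 [a, [b, c]]`, so `2/3 • β` works.
Conversely, the sum of the three cyclic shifts of the first kind of element equals the sum of the
three cyclic shifts of the second kind; evaluating `β` on it both ways gives `2 J = −2 J` for the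
Jacobiator `J`, and `4` is invertible.
-/

open TensorProduct

namespace TensorProduct

variable {R V : Type*} [CommRing R] [AddCommGroup V] [Module R V] (α : V ⊗[R] V →ₗ[R] V)

def jacobiator (a b c : V) : V :=
  α (α (a ⊗ₜ b) ⊗ₜ c) + α (α (b ⊗ₜ c) ⊗ₜ a) + α (α (c ⊗ₜ a) ⊗ₜ b)

noncomputable def assocSum : V ⊗[R] (V ⊗[R] V) →ₗ[R] V :=
  α ∘ₗ map α LinearMap.id ∘ₗ (TensorProduct.assoc R V V V).symm.toLinearMap
    + α ∘ₗ map LinearMap.id α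

@[simp]
theorem assocSum_tmul (a b c : V) :
    assocSum α (a ⊗ₜ (b ⊗ₜ c)) = α (α (a ⊗ₜ b) ⊗ₜ c) + α (a ⊗ₜ α (b ⊗ₜ c)) := by
  simp [assocSum]

variable {α} (hα : ∀ a b : V, α (a ⊗ₜ b) = -α (b ⊗ₜ a))
include hα

theorem jacobiator_eq_left (a b c : V) :
    jacobiator α a b c =
      α (α (a ⊗ₜ b) ⊗ₜ c) - α (a ⊗ₜ α (b ⊗ₜ c)) + α (b ⊗ₜ α (a ⊗ₜ c)) := by
  rw [jacobiator, hα (α (b ⊗ₜ c)), hα (α (c ⊗ₜ a)), hα c a, tmul_neg, map_neg]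
  abel

theorem jacobiator_eq_right (a b c : V) :
    jacobiator α a b c =
      α (α (a ⊗ₜ b) ⊗ₜ c) - α (α (a ⊗ₜ c) ⊗ₜ b) - α (a ⊗ₜ α (b ⊗ₜ c)) := by
  rw [jacobiator, hα (α (b ⊗ₜ c)), hα c a, neg_tmul, map_neg]
  abel

theorem assocSum_sub_swap_left (hJ : ∀ a b c : V, jacobiator α a b c = 0) (a b c : V) :
    assocSum α (a ⊗ₜ (b ⊗ₜ c) - b ⊗ₜ (a ⊗ₜ c)) = (3 : R) • α (α (a ⊗ₜ b) ⊗ₜ c) := by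
  have leibniz := hJ a b c
  rw [jacobiator_eq_left hα] at leibniz
  rw [map_sub, assocSum_tmul, assocSum_tmul, hα b a, neg_tmul, map_neg]
  linear_combination (norm := module) -leibniz

theorem assocSum_sub_swap_right (hJ : ∀ a b c : V, jacobiator α a b c = 0) (a b c : V) :
    assocSum α (a ⊗ₜ (b ⊗ₜ c) - a ⊗ₜ (c ⊗ₜ b)) = (3 : R) • α (a ⊗ₜ α (b ⊗ₜ c)) := by
  have leibniz := hJ a b c
  rw [jacobiator_eq_right hα] at leibniz
  rw [map_sub, assocSum_tmul, assocSum_tmul, hα c b, tmul_neg, map_neg]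
  linear_combination (norm := module) leibniz

theorem four_smul_jacobiator_eq_zero {β : V ⊗[R] (V ⊗[R] V) →ₗ[R] V}
    (hβ₁ : ∀ a b c : V,
      β (a ⊗ₜ (b ⊗ₜ c) - b ⊗ₜ (a ⊗ₜ c)) = (2 : R) • α (α (a ⊗ₜ b) ⊗ₜ c))
    (hβ₂ : ∀ a b c : V,
      β (a ⊗ₜ (b ⊗ₜ c) - a ⊗ₜ (c ⊗ₜ b)) = (2 : R) • α (a ⊗ₜ α (b ⊗ₜ c)))
    (a b c : V) : (4 : R) • jacobiator α a b c = 0 := by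
  have cyclic_sum_eq :
      ((a ⊗ₜ (b ⊗ₜ c) - b ⊗ₜ (a ⊗ₜ c)) + (b ⊗ₜ (c ⊗ₜ a) - c ⊗ₜ (b ⊗ₜ a))
          + (c ⊗ₜ (a ⊗ₜ b) - a ⊗ₜ (c ⊗ₜ b)) : V ⊗[R] (V ⊗[R] V)) =
        (a ⊗ₜ (b ⊗ₜ c) - a ⊗ₜ (c ⊗ₜ b)) + (b ⊗ₜ (c ⊗ₜ a) - b ⊗ₜ (a ⊗ₜ c))
          + (c ⊗ₜ (a ⊗ₜ b) - c ⊗ₜ (b ⊗ₜ a)) := by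
    abel
  have h := congrArg β cyclic_sum_eq
  simp only [map_add, hβ₁, hβ₂] at h
  rw [hα a (α (b ⊗ₜ c)), hα b (α (c ⊗ₜ a)), hα c (α (a ⊗ₜ b))] at h
  rw [jacobiator]
  linear_combination (norm := module) h

end TensorProduct

/-- Let `k` be a field of characteristic zero, `V` a `k`-vector space, and
`α : V ⊗ V → V` a `k`-linear map satisfying `α(a ⊗ b) = −α(b ⊗ a)`.  Then `α` satisfies the
Jacobi identity if and only if there exists a `k`-linear map `β : V ⊗ V ⊗ V → V` such that
`β(a⊗b⊗c − b⊗a⊗c) = 2·α(α(a⊗b)⊗c)` and `β(a⊗b⊗c − a⊗c⊗b) = 2·α(a⊗α(b⊗c))` for all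
`a, b, c ∈ V`. -/
theorem stmt_4 (k : Type*) [Field k] [CharZero k] (V : Type*) [AddCommGroup V] [Module k V]
    (α : V ⊗[k] V →ₗ[k] V) (hα : ∀ a b : V, α (a ⊗ₜ[k] b) = -α (b ⊗ₜ[k] a)) :
    (∀ a b c : V,
        α (α (a ⊗ₜ[k] b) ⊗ₜ[k] c) + α (α (b ⊗ₜ[k] c) ⊗ₜ[k] a)
          + α (α (c ⊗ₜ[k] a) ⊗ₜ[k] b) = 0) ↔
      ∃ β : V ⊗[k] (V ⊗[k] V) →ₗ[k] V,
        (∀ a b c : V,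
          β (a ⊗ₜ[k] (b ⊗ₜ[k] c) - b ⊗ₜ[k] (a ⊗ₜ[k] c)) =
            (2 : k) • α (α (a ⊗ₜ[k] b) ⊗ₜ[k] c)) ∧
        (∀ a b c : V,
          β (a ⊗ₜ[k] (b ⊗ₜ[k] c) - a ⊗ₜ[k] (c ⊗ₜ[k] b)) =
            (2 : k) • α (a ⊗ₜ[k] α (b ⊗ₜ[k] c))) := by
  have two_thirds_mul_three : (2 / 3 : k) * 3 = 2 := by norm_num
  constructor
  · intro hJ
    refine ⟨(2 / 3 : k) • assocSum α, fun a b c ↦ ?_, fun a b c ↦ ?_⟩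
    · rw [LinearMap.smul_apply, assocSum_sub_swap_left hα hJ, smul_smul, two_thirds_mul_three]
    · rw [LinearMap.smul_apply, assocSum_sub_swap_right hα hJ, smul_smul, two_thirds_mul_three]
  · rintro ⟨β, hβ₁, hβ₂⟩ a b c
    have h := four_smul_jacobiator_eq_zero hα hβ₁ hβ₂ a b c
    exact (smul_eq_zero.mp h).resolve_left (by norm_num)
end

section
/- For every natural number n, Σ_{i=0}^{n} (−1)^i · C(n,i) · bernoulli'_i · bernoulli'_{n−i} = (1 − n) · bernoulli'_n, where C(n,i) is the binomial coefficient. Equivalently, the formal power series φ(X) = X/(1 − e^{−X}) = Σ_{p≥0} bernoulli'_p X^p/p! in ℚ⟦X⟧ satisfies φ(−X)·φ(X) = φ(X) − X·φ′(X), where φ′ is the formal derivative of φ. -/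
/-!
Write `e = exp X` and `φ = bernoulli'PowerSeries`; since `bernoulli n = (-1)ⁿ bernoulli' n`,
`φ(-X) = bernoulliPowerSeries`. Mathlib gives `φ(-X) (e - 1) = X` and `φ (e - 1) = X e`;
differentiating the latter yields `φ' (e - 1) + φ e = (1 + X) e`. After multiplication by
`(e - 1)²`, which is not a zero divisor, `φ(-X) φ = φ - X φ'` becomes a linear combination of
these three identities. Taking `n!` times the `n`-th coefficient turns the product of exponential
generating functions into the binomial convolution of the claim.
-/

open PowerSeries Finset Nat

theorem PowerSeries.coeff_X_mul_derivative {R : Type*} [CommSemiring R] (f : R⟦X⟧) (n : ℕ) :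
    coeff n (X * d⁄dX R f) = n * coeff n f := by
  cases n with
  | zero => simp
  | succ m => rw [coeff_succ_X_mul, coeff_derivative, mul_comm]; push_cast; rfl

theorem PowerSeries.factorial_mul_coeff_mul_mk_div_factorial {K : Type*} [Field K] [CharZero K]
    (a b : ℕ → K) (n : ℕ) :
    n ! * coeff n (mk (fun k ↦ a k / k !) * mk fun k ↦ b k / k !) =
      ∑ i ∈ range (n + 1), n.choose i * a i * b (n - i) := by
  rw [coeff_mul, Nat.sum_antidiagonal_eq_sum_range_succ_mk, mul_sum]
  refine sum_congr rfl fun i hi ↦ ?_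
  rw [coeff_mk, coeff_mk, Nat.cast_choose K (Nat.lt_succ_iff.mp (mem_range.mp hi))]
  field_simp

theorem PowerSeries.exp_sub_one_ne_zero (A : Type*) [Ring A] [Algebra ℚ A] [Nontrivial A] :
    exp A - 1 ≠ 0 := fun h ↦ by
  simpa [coeff_exp, coeff_one] using congrArg (coeff 1) h

theorem bernoulli'PowerSeries_derivative_mul_exp_sub_one (A : Type*) [CommRing A] [Algebra ℚ A] :
    d⁄dX A (bernoulli'PowerSeries A) * (exp A - 1) + bernoulli'PowerSeries A * exp A =
      (1 + X) * exp A := by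
  have h := congrArg (d⁄dX A) (bernoulli'PowerSeries_mul_exp_sub_one A)
  simp only [Derivation.leibniz, map_sub, Derivation.map_one_eq_zero, derivative_exp,
    derivative_X, smul_eq_mul, sub_zero, mul_one] at h
  linear_combination h

theorem bernoulliPowerSeries_mul_bernoulli'PowerSeries (A : Type*) [CommRing A] [IsDomain A]
    [Algebra ℚ A] :
    bernoulliPowerSeries A * bernoulli'PowerSeries A =
      bernoulli'PowerSeries A - X * d⁄dX A (bernoulli'PowerSeries A) := by
  apply mul_right_cancel₀ (pow_ne_zero 2 (exp_sub_one_ne_zero A))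
  linear_combination
    bernoulli'PowerSeries A * (exp A - 1) * bernoulliPowerSeries_mul_exp_sub_one A
    - (exp A - 1) * (1 + X) * bernoulli'PowerSeries_mul_exp_sub_one A
    + X * (exp A - 1) * bernoulli'PowerSeries_derivative_mul_exp_sub_one A

/-- For every natural number `n`,
`Σ_{i=0}^{n} (−1)^i C(n,i) bernoulli'_i bernoulli'_{n−i} = (1 − n) bernoulli'_n`. -/
theorem stmt_7 (n : ℕ) :
    ∑ i ∈ Finset.range (n + 1),
        (-1 : ℚ) ^ i * (n.choose i : ℚ) * bernoulli' i * bernoulli' (n - i) =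
      (1 - (n : ℚ)) * bernoulli' n := by
  have hB : bernoulliPowerSeries ℚ = mk fun k ↦ bernoulli k / k ! := rfl
  have hB' : bernoulli'PowerSeries ℚ = mk fun k ↦ bernoulli' k / k ! := rfl
  have key := congrArg (fun f ↦ (n ! : ℚ) * coeff n f)
    (bernoulliPowerSeries_mul_bernoulli'PowerSeries ℚ)
  simp only [hB, hB', factorial_mul_coeff_mul_mk_div_factorial, map_sub, coeff_X_mul_derivative,
    coeff_mk] at key
  calc _ = ∑ i ∈ range (n + 1), (n.choose i : ℚ) * bernoulli i * bernoulli' (n - i) := by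
        simp only [bernoulli, mul_assoc, mul_left_comm ((-1 : ℚ) ^ _)]
    _ = (1 - (n : ℚ)) * bernoulli' n := by rw [key]; field_simp
end

section
/- Let (𝔤, 𝔥, 𝔫) be a tame triplet. Then α satisfies the Jacobi identity: α(α(x, y), z) + α(α(y, z), x) + α(α(z, x), y) = 0 for all x, y, z ∈ 𝔫. Consequently, 𝔫 equipped with the bracket α is a Lie algebra over k. -/
/-- Let `k` be a field of characteristic zero, `L` a Lie algebra over `k`,
`H ⊆ L` a Lie subalgebra and `N ⊆ L` a `k`-submodule with `L = H ⊕ N` as `k`-modules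
(projections `πH`, `πN`) and `[H, N] ⊆ N`.  Assume the triplet is tame:
`[πH [x, y], z] = 0` for all `x, y, z ∈ N`.  Then `α(x, y) := πN [x, y]` satisfies the Jacobi
identity on `N`: `α(α(x,y),z) + α(α(y,z),x) + α(α(z,x),y) = 0`; consequently `N` equipped with
`α` is a Lie algebra over `k`. -/
theorem stmt_9 (k : Type*) [Field k] [CharZero k] (L : Type*) [LieRing L] [LieAlgebra k L]
    (H : LieSubalgebra k L) (N : Submodule k L)
    (hcompl : IsCompl H.toSubmodule N)
    (πH πN : L →ₗ[k] L)
    (hπH : ∀ x : L, πH x ∈ H) (hπN : ∀ x : L, πN x ∈ N)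
    (hsum : ∀ x : L, πH x + πN x = x)
    (hHN : ∀ h ∈ H, ∀ x ∈ N, ⁅h, x⁆ ∈ N)
    (htame : ∀ x ∈ N, ∀ y ∈ N, ∀ z ∈ N, ⁅πH ⁅x, y⁆, z⁆ = (0 : L)) :
    ∀ x ∈ N, ∀ y ∈ N, ∀ z ∈ N,
      πN ⁅πN ⁅x, y⁆, z⁆ + πN ⁅πN ⁅y, z⁆, x⁆ + πN ⁅πN ⁅z, x⁆, y⁆ = (0 : L) := by
  intro x hx y hy z hz
  have key : ∀ a ∈ N, ∀ b ∈ N, ∀ c ∈ N, ⁅πN ⁅a, b⁆, c⁆ = ⁅⁅a, b⁆, c⁆ := by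
    intro a ha b hb c hc
    have h1 : πN ⁅a, b⁆ = ⁅a, b⁆ - πH ⁅a, b⁆ := eq_sub_of_add_eq' (hsum ⁅a, b⁆)
    rw [h1, sub_lie, htame a ha b hb c hc, sub_zero]
  rw [key x hx y hy z hz, key y hy z hz x hx, key z hz x hx y hy,
    ← map_add, ← map_add]
  have hjac : ⁅⁅x, y⁆, z⁆ + ⁅⁅y, z⁆, x⁆ + ⁅⁅z, x⁆, y⁆ = (0 : L) := by
    rw [lie_lie, lie_lie, lie_lie, ← lie_skew x z, ← lie_skew y x, ← lie_skew z y,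
      lie_neg, lie_neg, lie_neg]
    have h := lie_jacobi x y z
    have h2 : (2:ℤ) • (⁅x, ⁅y, z⁆⁆ + ⁅y, ⁅z, x⁆⁆ + ⁅z, ⁅x, y⁆⁆) = (0:L) := by
      rw [h, smul_zero]
    rw [smul_add, smul_add] at h2
    rw [← h2]
    abel
  rw [hjac, map_zero]
end

section
/- Let (𝔤, 𝔥, 𝔫) be a tame triplet. Then the bracket α is 𝔥-equivariant: for all h ∈ 𝔥 and all x, y ∈ 𝔫, one has [h, α(x, y)] = α([h, x], y) + α(x, [h, y]), where all three terms make sense because [h, x], [h, y] and [h, α(x, y)] lie in 𝔫. -/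
/-- Let `(L, H, N)` be a tame triplet (notation as in Statement 9).  Then the
bracket `α(x, y) = πN [x, y]` is `H`-equivariant: for all `h ∈ H` and `x, y ∈ N`,
`[h, α(x, y)] = α([h, x], y) + α(x, [h, y])` (all three terms lie in `N` since `[H, N] ⊆ N`). -/
theorem stmt_10 (k : Type*) [Field k] [CharZero k] (L : Type*) [LieRing L] [LieAlgebra k L]
    (H : LieSubalgebra k L) (N : Submodule k L)
    (hcompl : IsCompl H.toSubmodule N)
    (πH πN : L →ₗ[k] L)
    (hπH : ∀ x : L, πH x ∈ H) (hπN : ∀ x : L, πN x ∈ N)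
    (hsum : ∀ x : L, πH x + πN x = x)
    (hHN : ∀ h ∈ H, ∀ x ∈ N, ⁅h, x⁆ ∈ N)
    (htame : ∀ x ∈ N, ∀ y ∈ N, ∀ z ∈ N, ⁅πH ⁅x, y⁆, z⁆ = (0 : L)) :
    ∀ h ∈ H, ∀ x ∈ N, ∀ y ∈ N,
      ⁅h, πN ⁅x, y⁆⁆ = πN ⁅⁅h, x⁆, y⁆ + πN ⁅x, ⁅h, y⁆⁆ := by
  intro h hh x hx y hy
  set w := ⁅x, y⁆ with hw
  set a := ⁅⁅h, x⁆, y⁆ with ha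
  set b := ⁅x, ⁅h, y⁆⁆ with hb
  -- The difference lies in N
  have hdN : ⁅h, πN w⁆ - πN a - πN b ∈ N := by
    exact N.sub_mem (N.sub_mem (hHN h hh _ (hπN w)) (hπN a)) (hπN b)
  -- Jacobi identity
  have hjac : ⁅h, w⁆ = a + b := leibniz_lie h x y
  -- The difference also equals an element of H
  have hkey : ⁅h, πN w⁆ - πN a - πN b = πH a + πH b - ⁅h, πH w⁆ := by
    have h1 : ⁅h, πH w⁆ + ⁅h, πN w⁆ = a + b := by
      rw [← lie_add, hsum w, hjac]
    have h2 : πH a + πN a + (πH b + πN b) = a + b := by rw [hsum a, hsum b]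
    have h4 : (⁅h, πN w⁆ - πN a - πN b) - (πH a + πH b - ⁅h, πH w⁆)
        = (⁅h, πH w⁆ + ⁅h, πN w⁆) - (πH a + πN a + (πH b + πN b)) := by abel
    rw [h1, h2, sub_self] at h4
    exact sub_eq_zero.mp h4
  have hdH : ⁅h, πN w⁆ - πN a - πN b ∈ H.toSubmodule := by
    rw [hkey]
    exact Submodule.sub_mem _ (Submodule.add_mem _ (hπH a) (hπH b))
      (H.lie_mem hh (hπH w))
  have := hcompl.disjoint
  have hzero : ⁅h, πN w⁆ - πN a - πN b = 0 :=
    (Submodule.disjoint_def.mp this) _ hdH hdN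
  rw [sub_sub] at hzero
  exact sub_eq_zero.mp hzero
end

section
/- Let (𝔤, 𝔥, 𝔫) be a tame triplet. Then there exists a unique induced-type 𝔤-module structure ρ on U(𝔫_α): a Lie algebra homomorphism ρ : 𝔤 → End_k(U(𝔫_α)) such that ρ(x)(u) = ι(x)·u for all x ∈ 𝔫 and u ∈ U(𝔫_α), and for all h ∈ 𝔥: ρ(h)(1) = 0, ρ(h)(u·v) = ρ(h)(u)·v + u·ρ(h)(v) for all u, v ∈ U(𝔫_α), and ρ(h)(ι(x)) = ι(π_𝔫([h, x])) for all x ∈ 𝔫. -/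
attribute [local instance] LieRing.ofAssociativeRing LieAlgebra.ofAssociativeAlgebra

/-!
A derivation `f` of an algebra `A` is the same thing as an algebra map `u ↦ u + f u ε` into the
trivial square-zero extension `A ⊕ Aε`. Hence, by the universal property of `U(𝔫_α)`, every
derivation `d` of `𝔫_α` extends to a derivation `D d` of `U(𝔫_α)`, uniquely because `U(𝔫_α)` is
generated by `𝔫_α`; uniqueness also makes `d ↦ D d` a Lie algebra map.

Each `h ∈ 𝔥` acts on `𝔫 ≅ 𝔫_α` by the derivation `δ h = π_𝔫 ∘ ad h`, and `h ↦ δ h` is a Lie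
algebra map. Put `ρ(h + x) = D (δ h) + ι(x)·`. The bracket is respected on `𝔥 × 𝔥` because
`D ∘ δ` is a Lie map, on `𝔥 × 𝔫` because `⁅D, ι(x)·⁆ = (D ι(x))·` for a derivation `D`, and on
`𝔫 × 𝔫` because `⁅x, y⁆ = π_𝔥⁅x, y⁆ + α(x, y)` where, by tameness, `δ (π_𝔥⁅x, y⁆) = 0`.
Conversely, any such `ρ` is forced on `𝔫`, and on `𝔥` it is a derivation with prescribed values on
the generators `ι(𝔫_α)`.
-/

open UniversalEnvelopingAlgebra

theorem Submodule.apply_eq_self_of_disjoint {R V : Type*} [Ring R] [AddCommGroup V] [Module R V]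
    {A B : Submodule R V} (hAB : Disjoint A B) {p q : V → V} (hp : ∀ x, p x ∈ A)
    (hq : ∀ x, q x ∈ B) (hpq : ∀ x, p x + q x = x) {x : V} (hx : x ∈ B) : q x = x := by
  have hpx : p x ∈ B := by
    rw [← add_sub_cancel_right (p x) (q x), hpq]
    exact B.sub_mem hx (hq x)
  rw [← zero_add (q x), ← Submodule.disjoint_def.mp hAB _ (hp x) hpx, hpq]

theorem LinearMap.map_lie_of_codisjoint {R L L' : Type*} [CommRing R] [LieRing L] [LieAlgebra R L]
    [LieRing L'] [LieAlgebra R L'] {f : L →ₗ[R] L'} {A B : Submodule R L} (hcod : Codisjoint A B)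
    (hAA : ∀ x ∈ A, ∀ y ∈ A, f ⁅x, y⁆ = ⁅f x, f y⁆)
    (hAB : ∀ x ∈ A, ∀ y ∈ B, f ⁅x, y⁆ = ⁅f x, f y⁆)
    (hBB : ∀ x ∈ B, ∀ y ∈ B, f ⁅x, y⁆ = ⁅f x, f y⁆) (x y : L) :
    f ⁅x, y⁆ = ⁅f x, f y⁆ := by
  have hBA : ∀ x ∈ B, ∀ y ∈ A, f ⁅x, y⁆ = ⁅f x, f y⁆ := fun x hx y hy => by
    rw [← lie_skew, map_neg, hAB y hy x hx, lie_skew]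
  obtain ⟨x₁, x₂, hx₁, hx₂, rfl⟩ := Submodule.codisjoint_iff_exists_add_eq.mp hcod x
  obtain ⟨y₁, y₂, hy₁, hy₂, rfl⟩ := Submodule.codisjoint_iff_exists_add_eq.mp hcod y
  simp only [add_lie, lie_add, map_add, hAA x₁ hx₁ y₁ hy₁, hAB x₁ hx₁ y₂ hy₂,
    hBA x₂ hx₂ y₁ hy₁, hBB x₂ hx₂ y₂ hy₂]

section Derivation

variable {k A : Type*} [CommRing k] [Ring A] [Algebra k A]

/-- Mathlib's `Derivation` requires a commutative algebra, which `U(M)` is not. -/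
def Module.End.IsDerivation (f : Module.End k A) : Prop :=
  ∀ u v, f (u * v) = f u * v + u * f v

namespace Module.End.IsDerivation

variable {f g : Module.End k A}

theorem map_one (hf : f.IsDerivation) : f 1 = 0 := by
  simpa using hf 1 1

theorem add (hf : f.IsDerivation) (hg : g.IsDerivation) : (f + g).IsDerivation := fun u v => by
  simp only [LinearMap.add_apply, hf u v, hg u v, add_mul, mul_add]
  abel

theorem smul (c : k) (hf : f.IsDerivation) : (c • f).IsDerivation := fun u v => by
  simp only [LinearMap.smul_apply, hf u v, smul_add, smul_mul_assoc, mul_smul_comm]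

theorem lie (hf : f.IsDerivation) (hg : g.IsDerivation) : ⁅f, g⁆.IsDerivation := fun u v => by
  simp only [LieRing.of_associative_ring_bracket, LinearMap.sub_apply, Module.End.mul_apply,
    hf u v, hg u v, map_add, hf _ v, hf u _, hg _ v, hg u _]
  noncomm_ring

theorem lie_lmul (hf : f.IsDerivation) (u : A) :
    ⁅f, Algebra.lmul k A u⁆ = Algebra.lmul k A (f u) := by
  ext v
  simp [LieRing.of_associative_ring_bracket, hf u v]

def graph (hf : f.IsDerivation) : A →ₐ[k] TrivSqZeroExt A A where
  toFun u := TrivSqZeroExt.inl u + TrivSqZeroExt.inr (f u)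
  map_one' := by ext <;> simp [hf.map_one]
  map_mul' u v := by ext <;> simp [hf u v, add_comm]
  map_zero' := by ext <;> simp
  map_add' u v := by ext <;> simp [add_add_add_comm]
  commutes' c := by ext <;> simp [Algebra.algebraMap_eq_smul_one, hf.map_one]

end Module.End.IsDerivation

end Derivation

section UniversalEnvelopingAlgebra

variable {k M : Type*} [CommRing k] [LieRing M] [LieAlgebra k M]

local notation "𝓤" => UniversalEnvelopingAlgebra k M

theorem UniversalEnvelopingAlgebra.derivation_ext {f g : Module.End k 𝓤}
    (hf : f.IsDerivation) (hg : g.IsDerivation) (h : ∀ a, f (ι k a) = g (ι k a)) : f = g := by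
  have hgraph : hf.graph = hg.graph :=
    hom_ext k <| LieHom.ext fun a =>
      TrivSqZeroExt.ext rfl (by simpa [Module.End.IsDerivation.graph] using h a)
  ext u
  simpa [Module.End.IsDerivation.graph] using congr_arg (fun φ => (φ u).snd) hgraph

namespace LieDerivation

variable (d : LieDerivation k M M)

def toTrivSqZeroExt : M →ₗ⁅k⁆ TrivSqZeroExt 𝓤 𝓤 where
  toFun a := TrivSqZeroExt.inl (ι k a) + TrivSqZeroExt.inr (ι k (d a))
  map_add' a b := by ext <;> simp [-ι_apply]
  map_smul' c a := by ext <;> simp [-ι_apply]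
  map_lie' {a b} := by
    ext <;> simp only [TrivSqZeroExt.fst_sub, TrivSqZeroExt.snd_sub, TrivSqZeroExt.fst_mul,
      TrivSqZeroExt.snd_mul, TrivSqZeroExt.fst_add, TrivSqZeroExt.snd_add, TrivSqZeroExt.fst_inl,
      TrivSqZeroExt.snd_inl, TrivSqZeroExt.fst_inr, TrivSqZeroExt.snd_inr,
      LieRing.of_associative_ring_bracket, d.apply_lie_eq_add, map_add, LieHom.map_lie, add_zero,
      zero_add, smul_eq_mul, MulOpposite.smul_eq_mul_unop, MulOpposite.unop_op]
    abel

theorem fst_lift_toTrivSqZeroExt (u : 𝓤) : (lift k d.toTrivSqZeroExt u).fst = u := by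
  have : (TrivSqZeroExt.fstHom k 𝓤 𝓤).comp (lift k d.toTrivSqZeroExt) = AlgHom.id k 𝓤 :=
    hom_ext k <| LieHom.ext fun a => by simp [toTrivSqZeroExt]
  exact congr_arg (fun φ => φ u) this

def toEndUEA : Module.End k 𝓤 :=
  (TrivSqZeroExt.sndHom 𝓤 𝓤).restrictScalars k ∘ₗ (lift k d.toTrivSqZeroExt).toLinearMap

theorem toEndUEA_ι (a : M) : d.toEndUEA (ι k a) = ι k (d a) := by
  simp [toEndUEA, toTrivSqZeroExt]

theorem isDerivation_toEndUEA : d.toEndUEA.IsDerivation := fun u v => by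
  simp [toEndUEA, fst_lift_toTrivSqZeroExt, add_comm]

def toEndUEAHom : LieDerivation k M M →ₗ⁅k⁆ Module.End k 𝓤 where
  toFun := toEndUEA
  map_add' d₁ d₂ := derivation_ext (isDerivation_toEndUEA _)
    ((isDerivation_toEndUEA d₁).add (isDerivation_toEndUEA d₂)) fun a => by
      rw [LinearMap.add_apply, toEndUEA_ι, toEndUEA_ι, toEndUEA_ι, add_apply, map_add]
  map_smul' c d := derivation_ext (isDerivation_toEndUEA _)
    ((isDerivation_toEndUEA d).smul c) fun a => by
      rw [LinearMap.smul_apply, toEndUEA_ι, toEndUEA_ι, smul_apply, map_smul, RingHom.id_apply]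
  map_lie' {d₁ d₂} := derivation_ext (isDerivation_toEndUEA _)
    ((isDerivation_toEndUEA d₁).lie (isDerivation_toEndUEA d₂)) fun a => by
      rw [LieRing.of_associative_ring_bracket, LinearMap.sub_apply, Module.End.mul_apply,
        Module.End.mul_apply, toEndUEA_ι, toEndUEA_ι, toEndUEA_ι, toEndUEA_ι, toEndUEA_ι,
        commutator_apply, map_sub]

theorem toEndUEAHom_apply : toEndUEAHom d = d.toEndUEA := rfl

end LieDerivation

end UniversalEnvelopingAlgebra

/-- A tame triplet `(L, H, N)` with `N = incl(M)` and the bracket `α` transported to `M`: `proj` is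
the projection onto `M` along `H`, and the last field is tameness. -/
structure TameComplement {k L : Type*} [CommRing k] [LieRing L] [LieAlgebra k L]
    (H : LieSubalgebra k L) (M : Type*) [LieRing M] [LieAlgebra k M] where
  incl : M →ₗ[k] L
  proj : L →ₗ[k] M
  proj_incl (a : M) : proj (incl a) = a
  proj_eq_zero {h : L} (hh : h ∈ H) : proj h = 0
  sub_incl_proj_mem (x : L) : x - incl (proj x) ∈ H
  lie_incl_mem_range {h : L} (hh : h ∈ H) (a : M) : ⁅h, incl a⁆ ∈ LinearMap.range incl
  proj_lie_incl (a b : M) : proj ⁅incl a, incl b⁆ = ⁅a, b⁆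
  lie_sub_incl_lie_incl_eq_zero (a b c : M) : ⁅⁅incl a, incl b⁆ - incl ⁅a, b⁆, incl c⁆ = 0

namespace TameComplement

variable {k L M : Type*} [CommRing k] [LieRing L] [LieAlgebra k L] [LieRing M] [LieAlgebra k M]
  {H : LieSubalgebra k L} (S : TameComplement H M)

local notation "𝓤" => UniversalEnvelopingAlgebra k M

theorem incl_proj_lie {h : L} (hh : h ∈ H) (a : M) :
    S.incl (S.proj ⁅h, S.incl a⁆) = ⁅h, S.incl a⁆ := by
  obtain ⟨b, hb⟩ := S.lie_incl_mem_range hh a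
  rw [← hb, S.proj_incl]

theorem codisjoint : Codisjoint H.toSubmodule (LinearMap.range S.incl) :=
  Submodule.codisjoint_iff_exists_add_eq.mpr fun x =>
    ⟨_, _, S.sub_incl_proj_mem x, LinearMap.mem_range_self _ _, sub_add_cancel _ _⟩

def projH : L →ₗ[k] H :=
  (LinearMap.id - S.incl ∘ₗ S.proj).codRestrict H.toSubmodule S.sub_incl_proj_mem

theorem coe_projH (x : L) : (S.projH x : L) = x - S.incl (S.proj x) := rfl

theorem projH_of_mem {h : L} (hh : h ∈ H) : S.projH h = ⟨h, hh⟩ :=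
  Subtype.ext <| by rw [coe_projH, S.proj_eq_zero hh, map_zero, sub_zero]

theorem projH_incl (a : M) : S.projH (S.incl a) = 0 :=
  Subtype.ext <| by rw [coe_projH, S.proj_incl, sub_self, ZeroMemClass.coe_zero]

def derivation (h : H) : LieDerivation k M M where
  toLinearMap := S.proj ∘ₗ LieAlgebra.ad k L h ∘ₗ S.incl
  leibniz' a b := by
    have hz : ⁅S.incl a, S.incl b⁆ - S.incl ⁅a, b⁆ ∈ H := by
      simpa [S.proj_lie_incl] using S.sub_incl_proj_mem ⁅S.incl a, S.incl b⁆
    have hproj_lie : S.proj ⁅(h : L), S.incl ⁅a, b⁆⁆ = S.proj ⁅(h : L), ⁅S.incl a, S.incl b⁆⁆ := by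
      rw [← sub_eq_zero, ← map_sub, ← lie_sub, ← neg_sub, lie_neg, map_neg,
        S.proj_eq_zero (H.lie_mem h.2 hz), neg_zero]
    simp only [LinearMap.coe_comp, Function.comp_apply, LieAlgebra.ad_apply]
    conv_lhs => rw [hproj_lie, leibniz_lie, ← S.incl_proj_lie h.2 a, ← S.incl_proj_lie h.2 b,
      map_add, S.proj_lie_incl, S.proj_lie_incl]
    rw [← lie_skew b, sub_neg_eq_add, add_comm]

theorem derivation_apply (h : H) (a : M) : S.derivation h a = S.proj ⁅(h : L), S.incl a⁆ := rfl

def derivationHom : H →ₗ⁅k⁆ LieDerivation k M M where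
  toFun := S.derivation
  map_add' h h' := LieDerivation.ext fun a => by simp [derivation_apply, add_lie]
  map_smul' c h := LieDerivation.ext fun a => by simp [derivation_apply, smul_lie]
  map_lie' {h h'} := LieDerivation.ext fun a => by
    rw [LieDerivation.commutator_apply, derivation_apply, derivation_apply, derivation_apply,
      derivation_apply, derivation_apply, S.incl_proj_lie h'.2, S.incl_proj_lie h.2,
      LieSubalgebra.coe_bracket, lie_lie, map_sub]

theorem derivationHom_apply (h : H) (a : M) :
    S.derivationHom h a = S.proj ⁅(h : L), S.incl a⁆ := rfl

theorem derivationHom_projH_lie_incl (a b : M) :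
    S.derivationHom (S.projH ⁅S.incl a, S.incl b⁆) = 0 :=
  LieDerivation.ext fun c => by
    rw [derivationHom_apply, coe_projH, S.proj_lie_incl, S.lie_sub_incl_lie_incl_eq_zero, map_zero,
      LieDerivation.zero_apply]

def inducedAction : L →ₗ[k] Module.End k 𝓤 :=
  (Algebra.lmul k 𝓤).toLinearMap ∘ₗ (ι k : M →ₗ⁅k⁆ 𝓤).toLinearMap ∘ₗ S.proj +
    (LieDerivation.toEndUEAHom.comp S.derivationHom).toLinearMap ∘ₗ S.projH

theorem inducedAction_incl (a : M) : S.inducedAction (S.incl a) = Algebra.lmul k 𝓤 (ι k a) := by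
  simp [inducedAction, S.proj_incl, S.projH_incl]

theorem inducedAction_of_mem {h : L} (hh : h ∈ H) :
    S.inducedAction h = LieDerivation.toEndUEAHom (S.derivationHom ⟨h, hh⟩) := by
  simp [inducedAction, S.proj_eq_zero hh, S.projH_of_mem hh]

theorem inducedAction_lie (x y : L) :
    S.inducedAction ⁅x, y⁆ = ⁅S.inducedAction x, S.inducedAction y⁆ := by
  refine LinearMap.map_lie_of_codisjoint S.codisjoint (fun h hh h' hh' => ?_) ?_ ?_ x y
  · rw [S.inducedAction_of_mem (H.lie_mem hh hh'), S.inducedAction_of_mem hh,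
      S.inducedAction_of_mem hh']
    exact (LieDerivation.toEndUEAHom.comp S.derivationHom).map_lie ⟨h, hh⟩ ⟨h', hh'⟩
  · rintro h hh _ ⟨a, rfl⟩
    rw [← S.incl_proj_lie hh, S.inducedAction_incl, S.inducedAction_incl, S.inducedAction_of_mem hh,
      LieDerivation.toEndUEAHom_apply, (LieDerivation.isDerivation_toEndUEA _).lie_lmul,
      LieDerivation.toEndUEA_ι]
    rfl
  · rintro _ ⟨a, rfl⟩ _ ⟨b, rfl⟩
    have hsplit : ⁅S.incl a, S.incl b⁆ = (S.projH ⁅S.incl a, S.incl b⁆ : L) + S.incl ⁅a, b⁆ := by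
      rw [coe_projH, S.proj_lie_incl, sub_add_cancel]
    rw [hsplit, map_add, S.inducedAction_of_mem (S.projH _).2, Subtype.coe_eta,
      S.derivationHom_projH_lie_incl, map_zero, zero_add, S.inducedAction_incl,
      S.inducedAction_incl, S.inducedAction_incl]
    exact ((Algebra.lmul k 𝓤).toLieHom.comp (ι k)).map_lie a b

def inducedRep : L →ₗ⁅k⁆ Module.End k 𝓤 :=
  { S.inducedAction with map_lie' := fun {x y} => S.inducedAction_lie x y }

theorem inducedRep_apply (x : L) : S.inducedRep x = S.inducedAction x := rfl

theorem isDerivation_inducedRep {h : L} (hh : h ∈ H) : (S.inducedRep h).IsDerivation := by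
  rw [inducedRep_apply, S.inducedAction_of_mem hh]
  exact LieDerivation.isDerivation_toEndUEA _

theorem inducedRep_ι {h : L} (hh : h ∈ H) (a : M) :
    S.inducedRep h (ι k a) = ι k (S.proj ⁅h, S.incl a⁆) := by
  rw [inducedRep_apply, S.inducedAction_of_mem hh, LieDerivation.toEndUEAHom_apply,
    LieDerivation.toEndUEA_ι, derivationHom_apply]

theorem existsUnique_inducedRep :
    ∃! ρ : L →ₗ⁅k⁆ Module.End k 𝓤,
      (∀ (a : M) (u : 𝓤), ρ (S.incl a) u = ι k a * u) ∧
      (∀ h ∈ H, ρ h 1 = 0) ∧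
      (∀ h ∈ H, (ρ h).IsDerivation) ∧
      (∀ h ∈ H, ∀ a b : M, S.incl b = ⁅h, S.incl a⁆ → ρ h (ι k a) = ι k b) := by
  refine ⟨S.inducedRep, ⟨fun a u => ?_, fun h hh => (S.isDerivation_inducedRep hh).map_one,
    fun h hh => S.isDerivation_inducedRep hh, fun h hh a b hb => ?_⟩, ?_⟩
  · rw [inducedRep_apply, inducedAction_incl]
    rfl
  · rw [S.inducedRep_ι hh, ← hb, S.proj_incl]
  · rintro ρ ⟨hincl, -, hder, hι⟩
    refine LinearMap.ext_on_codisjoint S.codisjoint (fun h hh => ?_) ?_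
    · refine derivation_ext (hder h hh) (S.isDerivation_inducedRep hh) fun a => ?_
      rw [S.inducedRep_ι hh, hι h hh a _ (S.incl_proj_lie hh a)]
    · rintro _ ⟨a, rfl⟩
      ext u
      rw [hincl, inducedRep_apply, inducedAction_incl]
      rfl

end TameComplement

def TameComplement.ofProjections {k L M : Type*} [CommRing k] [LieRing L] [LieAlgebra k L]
    [LieRing M] [LieAlgebra k M] {H : LieSubalgebra k L} {N : Submodule k L}
    (hdisj : Disjoint H.toSubmodule N) {πH πN : L →ₗ[k] L} (hπH : ∀ x, πH x ∈ H)
    (hπN : ∀ x, πN x ∈ N) (hsum : ∀ x, πH x + πN x = x)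
    (hHN : ∀ h ∈ H, ∀ x ∈ N, ⁅h, x⁆ ∈ N)
    (htame : ∀ x ∈ N, ∀ y ∈ N, ∀ z ∈ N, ⁅πH ⁅x, y⁆, z⁆ = 0)
    {incl : M →ₗ[k] L} (hrange : LinearMap.range incl = N)
    (hbr : ∀ a b, incl ⁅a, b⁆ = πN ⁅incl a, incl b⁆)
    {g : L →ₗ[k] M} (hg : g ∘ₗ incl = LinearMap.id) : TameComplement H M :=
  have hmem (a : M) : incl a ∈ N := hrange ▸ LinearMap.mem_range_self incl a
  have hπN_self {x : L} (hx : x ∈ N) : πN x = x :=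
    Submodule.apply_eq_self_of_disjoint hdisj hπH hπN hsum hx
  have hπN_H {h : L} (hh : h ∈ H) : πN h = 0 := by
    have := hsum h
    rwa [Submodule.apply_eq_self_of_disjoint hdisj.symm hπN hπH
      (fun x => (add_comm _ _).trans (hsum x)) hh, add_eq_left] at this
  have hg_incl (a : M) : g (incl a) = a := LinearMap.congr_fun hg a
  have hincl_g {x : L} (hx : x ∈ N) : incl (g x) = x := by
    obtain ⟨a, rfl⟩ := hrange ▸ hx
    rw [hg_incl]
  have hπH_eq (x : L) : πH x = x - incl (g (πN x)) := by
    rw [hincl_g (hπN x), eq_sub_iff_add_eq, hsum]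
  { incl
    proj := g ∘ₗ πN
    proj_incl a := by simp [hπN_self (hmem a), hg_incl]
    proj_eq_zero hh := by simp [hπN_H hh]
    sub_incl_proj_mem x := hπH_eq x ▸ hπH x
    lie_incl_mem_range hh a := hrange ▸ hHN _ hh _ (hmem a)
    proj_lie_incl a b := by simp [← hbr, hg_incl]
    lie_sub_incl_lie_incl_eq_zero a b c := by
      rw [hbr, ← hincl_g (hπN _), ← hπH_eq, htame _ (hmem a) _ (hmem b) _ (hmem c)] }

theorem stmt_11_general (k : Type*) [Field k] (L : Type*) [LieRing L] [LieAlgebra k L]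
    (H : LieSubalgebra k L) (N : Submodule k L)
    (hcompl : IsCompl H.toSubmodule N)
    (πH πN : L →ₗ[k] L)
    (hπH : ∀ x : L, πH x ∈ H) (hπN : ∀ x : L, πN x ∈ N)
    (hsum : ∀ x : L, πH x + πN x = x)
    (hHN : ∀ h ∈ H, ∀ x ∈ N, ⁅h, x⁆ ∈ N)
    (htame : ∀ x ∈ N, ∀ y ∈ N, ∀ z ∈ N, ⁅πH ⁅x, y⁆, z⁆ = (0 : L))
    (M : Type*) [LieRing M] [LieAlgebra k M]
    (incl : M →ₗ[k] L) (hinj : Function.Injective incl)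
    (hrange : LinearMap.range incl = N)
    (hbr : ∀ a b : M, incl ⁅a, b⁆ = πN ⁅incl a, incl b⁆) :
    ∃! ρ : L →ₗ⁅k⁆ Module.End k (UniversalEnvelopingAlgebra k M),
      (∀ (a : M) (u : UniversalEnvelopingAlgebra k M),
          ρ (incl a) u = UniversalEnvelopingAlgebra.ι k a * u) ∧
      (∀ h ∈ H, ρ h (1 : UniversalEnvelopingAlgebra k M) = 0) ∧
      (∀ h ∈ H, ∀ u v : UniversalEnvelopingAlgebra k M,
          ρ h (u * v) = ρ h u * v + u * ρ h v) ∧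
      (∀ h ∈ H, ∀ a b : M, incl b = πN ⁅h, incl a⁆ →
          ρ h (UniversalEnvelopingAlgebra.ι k a) = UniversalEnvelopingAlgebra.ι k b) := by
  obtain ⟨g, hg⟩ := incl.exists_leftInverse_of_injective (LinearMap.ker_eq_bot.mpr hinj)
  have hπN_lie (h : L) (hh : h ∈ H) (a : M) : πN ⁅h, incl a⁆ = ⁅h, incl a⁆ :=
    Submodule.apply_eq_self_of_disjoint hcompl.disjoint hπH hπN hsum
      (hHN h hh _ (hrange ▸ LinearMap.mem_range_self incl a))
  let S := TameComplement.ofProjections hcompl.disjoint hπH hπN hsum hHN htame hrange hbr hg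
  refine (existsUnique_congr fun ρ => ?_).mp S.existsUnique_inducedRep
  refine and_congr Iff.rfl (and_congr Iff.rfl (and_congr Iff.rfl ?_))
  exact forall₂_congr fun h hh => by simp only [hπN_lie h hh]; rfl

/-- Let `(L, H, N)` be a tame triplet (notation as in Statement 9) and let
`M` (playing the role of `𝔫_α`) be a Lie algebra over `k` realizing `N` equipped with the
bracket `α(x,y) = πN [x,y]`: `incl : M →ₗ[k] L` is injective with range `N` and
`incl ⁅a,b⁆ = πN ⁅incl a, incl b⁆`.  Then there exists a unique induced-type `L`-module
structure `ρ` on `U(M)`: a Lie algebra homomorphism `ρ : L → End_k(U(M))` such that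
`ρ(x)(u) = ι(x)·u` for `x ∈ N`, and for all `h ∈ H`: `ρ(h)(1) = 0`, `ρ(h)` is a derivation,
and `ρ(h)(ι(x)) = ι(πN [h, x])` for `x ∈ N`. -/
theorem stmt_11 (k : Type*) [Field k] [CharZero k] (L : Type*) [LieRing L] [LieAlgebra k L]
    (H : LieSubalgebra k L) (N : Submodule k L)
    (hcompl : IsCompl H.toSubmodule N)
    (πH πN : L →ₗ[k] L)
    (hπH : ∀ x : L, πH x ∈ H) (hπN : ∀ x : L, πN x ∈ N)
    (hsum : ∀ x : L, πH x + πN x = x)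
    (hHN : ∀ h ∈ H, ∀ x ∈ N, ⁅h, x⁆ ∈ N)
    (htame : ∀ x ∈ N, ∀ y ∈ N, ∀ z ∈ N, ⁅πH ⁅x, y⁆, z⁆ = (0 : L))
    (M : Type*) [LieRing M] [LieAlgebra k M]
    (incl : M →ₗ[k] L) (hinj : Function.Injective incl)
    (hrange : LinearMap.range incl = N)
    (hbr : ∀ a b : M, incl ⁅a, b⁆ = πN ⁅incl a, incl b⁆) :
    ∃! ρ : L →ₗ⁅k⁆ Module.End k (UniversalEnvelopingAlgebra k M),
      (∀ (a : M) (u : UniversalEnvelopingAlgebra k M),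
          ρ (incl a) u = UniversalEnvelopingAlgebra.ι k a * u) ∧
      (∀ h ∈ H, ρ h (1 : UniversalEnvelopingAlgebra k M) = 0) ∧
      (∀ h ∈ H, ∀ u v : UniversalEnvelopingAlgebra k M,
          ρ h (u * v) = ρ h u * v + u * ρ h v) ∧
      (∀ h ∈ H, ∀ a b : M, incl b = πN ⁅h, incl a⁆ →
          ρ h (UniversalEnvelopingAlgebra.ι k a) = UniversalEnvelopingAlgebra.ι k b) :=
  stmt_11_general k L H N hcompl πH πN hπH hπN hsum hHN htame M incl hinj hrange hbr
end

section
/- Let (𝔤, 𝔥, 𝔫) be a tame triplet and ρ an induced-type 𝔤-module structure on U(𝔫_α). Then for every k-vector space V equipped with a Lie algebra homomorphism ρ_V : 𝔤 → End_k(V), the map f ↦ f(1) is a bijection from the set of k-linear maps f : U(𝔫_α) → V satisfying f(ρ(a)(u)) = ρ_V(a)(f(u)) for all a ∈ 𝔤 and u ∈ U(𝔫_α), onto the set {v ∈ V : ρ_V(h)(v) = 0 for all h ∈ 𝔥}. In other words, U(𝔫_α) realizes the induced 𝔤-module Ind_𝔥^𝔤 k of the trivial 𝔥-module k. -/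
/-!
Left multiplication by `ι m` on `U(𝔫_α)` is `ρ m`, and `U(𝔫_α)` is reached from `1` by these
operators, so an equivariant `f` is determined by `f 1`, which is `𝔥`-invariant since `ρ h 1 = 0`.

Conversely, let `v` be `𝔥`-invariant. On the subspace `V₀` killed by all `πH ⁅x, y⁆` with
`x, y ∈ 𝔫` (it contains `v`), the action of `𝔫` is a representation of `𝔫_α`, and tameness makes
`V₀` stable under `𝔫`. Extending it to `U(𝔫_α)` and applying the result to `v` gives `f`, which is
`𝔫`-equivariant by construction and `𝔥`-equivariant by induction, because `ρ h` is a derivation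
sending `ι m` to `ι ⁅h, m⁆` and `⁅h, 𝔫⁆ ⊆ 𝔫`.
-/

attribute [local instance 100] LieRing.ofAssociativeRing

open UniversalEnvelopingAlgebra

namespace UniversalEnvelopingAlgebra

variable {k : Type*} [CommRing k] {M : Type*} [LieRing M] [LieAlgebra k M]
  {V : Type*} [AddCommGroup V] [Module k V]

@[elab_as_elim]
theorem induction_ι_mul {C : UniversalEnvelopingAlgebra k M → Prop}
    (u : UniversalEnvelopingAlgebra k M) (one : C 1) (ι_mul : ∀ m u, C u → C (ι k m * u))
    (add : ∀ u w, C u → C w → C (u + w)) (smul : ∀ (r : k) u, C u → C (r • u)) : C u := by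
  suffices h : ∀ t w, C w → C (mkAlgHom k M t * w) by
    obtain ⟨t, rfl⟩ : ∃ t, mkAlgHom k M t = u := RingCon.mkₐ_surjective _ u
    simpa using h t 1 one
  intro t
  induction t using TensorAlgebra.induction (R := k) with
  | algebraMap r => intro w hw; rw [AlgHom.commutes, ← Algebra.smul_def]; exact smul r w hw
  | ι m => exact ι_mul m
  | mul a b ha hb => intro w hw; rw [map_mul, mul_assoc]; exact ha _ (hb w hw)
  | add a b ha hb => intro w hw; rw [map_add, add_mul]; exact add _ _ (ha w hw) (hb w hw)

theorem linearMap_ext_of_map_ι_mul (φ : M → Module.End k V)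
    {F G : UniversalEnvelopingAlgebra k M →ₗ[k] V}
    (hF : ∀ m u, F (ι k m * u) = φ m (F u)) (hG : ∀ m u, G (ι k m * u) = φ m (G u))
    (h1 : F 1 = G 1) : F = G := by
  refine LinearMap.ext fun u => ?_
  induction u using induction_ι_mul with
  | one => exact h1
  | ι_mul m u hu => rw [hF, hG, hu]
  | add u w hu hw => rw [map_add, map_add, hu, hw]
  | smul r u hu => rw [map_smul, map_smul, hu]

theorem exists_linearMap_map_ι_mul (φ : M →ₗ[k] Module.End k V) (V₀ : Submodule k V)
    (hV₀ : ∀ m, ∀ x ∈ V₀, φ m x ∈ V₀) (hlie : ∀ a b, ∀ x ∈ V₀, φ ⁅a, b⁆ x = ⁅φ a, φ b⁆ x)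
    {v : V} (hv : v ∈ V₀) :
    ∃ F : UniversalEnvelopingAlgebra k M →ₗ[k] V, F 1 = v ∧ ∀ m u, F (ι k m * u) = φ m (F u) := by
  let φ₀ : M →ₗ⁅k⁆ Module.End k V₀ :=
    { toFun m := (φ m).restrict (hV₀ m)
      map_add' a b := by ext; simp
      map_smul' r a := by ext; simp
      map_lie' {a b} := by ext x; simpa [Ring.lie_def] using hlie a b x x.2 }
  refine ⟨V₀.subtype ∘ₗ LinearMap.applyₗ ⟨v, hv⟩ ∘ₗ (lift k φ₀).toLinearMap, by simp,
    fun m u => by simp [φ₀]⟩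

theorem map_apply_eq_of_leibniz (φ : M → Module.End k V)
    {F : UniversalEnvelopingAlgebra k M →ₗ[k] V} (hF : ∀ m u, F (ι k m * u) = φ m (F u))
    {D : Module.End k (UniversalEnvelopingAlgebra k M)} {T : Module.End k V}
    (hD : ∀ u w, D (u * w) = D u * w + u * D w) (hT : T (F 1) = 0)
    (hDι : ∀ m u, F (D (ι k m) * u) = ⁅T, φ m⁆ (F u)) (u : UniversalEnvelopingAlgebra k M) :
    F (D u) = T (F u) := by
  induction u using induction_ι_mul with
  | one =>
    have hD₁ : D 1 = 0 := by simpa using hD 1 1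
    rw [hD₁, map_zero, hT]
  | ι_mul m u hu =>
    rw [hD, map_add, hDι, hF, hF, hu, Ring.lie_def]
    simp
  | add u w hu hw => simp only [map_add, hu, hw]
  | smul r u hu => simp only [map_smul, hu]

end UniversalEnvelopingAlgebra

theorem apply_eq_self_of_disjoint_of_add_eq {R E : Type*} [Ring R] [AddCommGroup E] [Module R E]
    {A B : Submodule R E} (hAB : Disjoint A B) {πA πB : E → E} (hπA : ∀ x, πA x ∈ A)
    (hπB : ∀ x, πB x ∈ B) (hsum : ∀ x, πA x + πB x = x) {x : E} (hx : x ∈ B) : πB x = x := by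
  have hπAx : πA x = 0 := Submodule.disjoint_def.mp hAB _ (hπA x) <| by
    rw [eq_sub_of_add_eq (hsum x)]
    exact B.sub_mem hx (hπB x)
  simpa [hπAx] using hsum x

section TameTriplet

variable {k : Type*} [CommRing k] {L : Type*} [LieRing L] [LieAlgebra k L]
  {V : Type*} [AddCommGroup V] [Module k V]

def tameKernel (N : Submodule k L) (πH : L →ₗ[k] L) (ρV : L →ₗ⁅k⁆ Module.End k V) :
    Submodule k V :=
  ⨅ (y : N) (z : N), LinearMap.ker (ρV (πH ⁅(y : L), z⁆))

variable {N : Submodule k L} {πH πN : L →ₗ[k] L} {ρV : L →ₗ⁅k⁆ Module.End k V}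

theorem mem_tameKernel {x : V} :
    x ∈ tameKernel N πH ρV ↔ ∀ y ∈ N, ∀ z ∈ N, ρV (πH ⁅y, z⁆) x = 0 := by
  simp [tameKernel, Submodule.mem_iInf]

theorem apply_mem_tameKernel (htame : ∀ x ∈ N, ∀ y ∈ N, ∀ z ∈ N, ⁅πH ⁅x, y⁆, z⁆ = (0 : L))
    {z : L} (hz : z ∈ N) {x : V} (hx : x ∈ tameKernel N πH ρV) :
    ρV z x ∈ tameKernel N πH ρV := by
  refine mem_tameKernel.2 fun y hy y' hy' => ?_
  have hcomm : ρV (πH ⁅y, y'⁆) * ρV z = ρV z * ρV (πH ⁅y, y'⁆) := by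
    rw [← sub_eq_zero, ← Ring.lie_def, ← LieHom.map_lie, htame y hy y' hy' z hz, map_zero]
  rw [← Module.End.mul_apply, hcomm, Module.End.mul_apply, mem_tameKernel.1 hx y hy y' hy',
    map_zero]

theorem apply_πN_lie_of_mem_tameKernel (hsum : ∀ x : L, πH x + πN x = x) {y z : L}
    (hy : y ∈ N) (hz : z ∈ N) {x : V} (hx : x ∈ tameKernel N πH ρV) :
    ρV (πN ⁅y, z⁆) x = ⁅ρV y, ρV z⁆ x := by
  rw [← LieHom.map_lie]
  conv_rhs => rw [← hsum ⁅y, z⁆]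
  rw [map_add, LinearMap.add_apply, mem_tameKernel.1 hx y hy z hz, zero_add]

end TameTriplet

theorem stmt_12_general (k : Type*) [Field k] (L : Type*) [LieRing L] [LieAlgebra k L]
    (H : LieSubalgebra k L) (N : Submodule k L)
    (hcompl : IsCompl H.toSubmodule N)
    (πH πN : L →ₗ[k] L)
    (hπH : ∀ x : L, πH x ∈ H) (hπN : ∀ x : L, πN x ∈ N)
    (hsum : ∀ x : L, πH x + πN x = x)
    (hHN : ∀ h ∈ H, ∀ x ∈ N, ⁅h, x⁆ ∈ N)
    (htame : ∀ x ∈ N, ∀ y ∈ N, ∀ z ∈ N, ⁅πH ⁅x, y⁆, z⁆ = (0 : L))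
    (M : Type*) [LieRing M] [LieAlgebra k M]
    (incl : M →ₗ[k] L)
    (hrange : LinearMap.range incl = N)
    (hbr : ∀ a b : M, incl ⁅a, b⁆ = πN ⁅incl a, incl b⁆)
    (ρ : L →ₗ⁅k⁆ Module.End k (UniversalEnvelopingAlgebra k M))
    (hρ₁ : ∀ (a : M) (u : UniversalEnvelopingAlgebra k M),
      ρ (incl a) u = UniversalEnvelopingAlgebra.ι k a * u)
    (hρ₂ : ∀ h ∈ H, ρ h (1 : UniversalEnvelopingAlgebra k M) = 0)
    (hρ₃ : ∀ h ∈ H, ∀ u v : UniversalEnvelopingAlgebra k M,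
      ρ h (u * v) = ρ h u * v + u * ρ h v)
    (hρ₄ : ∀ h ∈ H, ∀ a b : M, incl b = πN ⁅h, incl a⁆ →
      ρ h (UniversalEnvelopingAlgebra.ι k a) = UniversalEnvelopingAlgebra.ι k b)
    (V : Type*) [AddCommGroup V] [Module k V]
    (ρV : L →ₗ⁅k⁆ Module.End k V) :
    (∀ f : UniversalEnvelopingAlgebra k M →ₗ[k] V,
        (∀ (a : L) (u : UniversalEnvelopingAlgebra k M), f (ρ a u) = ρV a (f u)) →
        ∀ h ∈ H, ρV h (f 1) = 0) ∧
    (∀ f g : UniversalEnvelopingAlgebra k M →ₗ[k] V,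
        (∀ (a : L) (u : UniversalEnvelopingAlgebra k M), f (ρ a u) = ρV a (f u)) →
        (∀ (a : L) (u : UniversalEnvelopingAlgebra k M), g (ρ a u) = ρV a (g u)) →
        f 1 = g 1 → f = g) ∧
    (∀ v : V, (∀ h ∈ H, ρV h v = 0) →
        ∃ f : UniversalEnvelopingAlgebra k M →ₗ[k] V,
          (∀ (a : L) (u : UniversalEnvelopingAlgebra k M), f (ρ a u) = ρV a (f u)) ∧
          f 1 = v) := by
  have hincl : ∀ m, incl m ∈ N := fun m => hrange ▸ LinearMap.mem_range_self incl m
  have hι_mul : ∀ {F : UniversalEnvelopingAlgebra k M →ₗ[k] V},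
      (∀ a u, F (ρ a u) = ρV a (F u)) → ∀ m u, F (ι k m * u) = ρV (incl m) (F u) :=
    fun hF m u => by rw [← hρ₁, hF]
  refine ⟨fun f hf h hh => ?_, fun f g hf hg h1 => ?_, fun v hv => ?_⟩
  · simpa [hρ₂ h hh] using (hf h 1).symm
  · exact linearMap_ext_of_map_ι_mul _ (hι_mul hf) (hι_mul hg) h1
  obtain ⟨F, hF1, hFι⟩ := exists_linearMap_map_ι_mul (ρV.toLinearMap ∘ₗ incl)
    (tameKernel N πH ρV) (fun m _ hx => apply_mem_tameKernel htame (hincl m) hx)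
    (fun a b x hx => by
      simp only [LinearMap.comp_apply, LieHom.coe_toLinearMap, hbr]
      exact apply_πN_lie_of_mem_tameKernel hsum (hincl a) (hincl b) hx)
    (mem_tameKernel.2 fun _ _ _ _ => hv _ (hπH _))
  have hFH : ∀ h ∈ H, ∀ u, F (ρ h u) = ρV h (F u) := fun h hh =>
    map_apply_eq_of_leibniz _ hFι (hρ₃ h hh) (hF1 ▸ hv h hh) fun m u => by
      have hN : ⁅h, incl m⁆ ∈ N := hHN h hh _ (hincl m)
      obtain ⟨m', hm'⟩ : ⁅h, incl m⁆ ∈ LinearMap.range incl := hrange ▸ hN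
      rw [hρ₄ h hh m m' (by rw [hm', apply_eq_self_of_disjoint_of_add_eq hcompl.disjoint hπH
        hπN hsum hN]), hFι]
      simp [hm']
  refine ⟨F, fun a u => ?_, hF1⟩
  obtain ⟨m, hm⟩ : πN a ∈ LinearMap.range incl := hrange ▸ hπN a
  rw [← hsum a, map_add, LinearMap.add_apply, map_add, hFH _ (hπH a), ← hm, hρ₁, hFι]
  simp

/-- Let `(L, H, N)` be a tame triplet (notation as in Statement 9), `M` a Lie
algebra realizing `N` with the bracket `α` (as in Statement 11), and `ρ` an induced-type
`L`-module structure on `U(M)`.  Then for every `k`-vector space `V` with a Lie algebra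
homomorphism `ρV : L → End_k(V)`, the map `f ↦ f(1)` is a bijection from the set of
`L`-equivariant `k`-linear maps `f : U(M) → V` onto the set `{v ∈ V : ρV(h)(v) = 0 ∀ h ∈ H}`:
`U(M)` realizes the induced module `Ind_H^L k` of the trivial `H`-module. -/
theorem stmt_12 (k : Type*) [Field k] [CharZero k] (L : Type*) [LieRing L] [LieAlgebra k L]
    (H : LieSubalgebra k L) (N : Submodule k L)
    (hcompl : IsCompl H.toSubmodule N)
    (πH πN : L →ₗ[k] L)
    (hπH : ∀ x : L, πH x ∈ H) (hπN : ∀ x : L, πN x ∈ N)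
    (hsum : ∀ x : L, πH x + πN x = x)
    (hHN : ∀ h ∈ H, ∀ x ∈ N, ⁅h, x⁆ ∈ N)
    (htame : ∀ x ∈ N, ∀ y ∈ N, ∀ z ∈ N, ⁅πH ⁅x, y⁆, z⁆ = (0 : L))
    (M : Type*) [LieRing M] [LieAlgebra k M]
    (incl : M →ₗ[k] L) (hinj : Function.Injective incl)
    (hrange : LinearMap.range incl = N)
    (hbr : ∀ a b : M, incl ⁅a, b⁆ = πN ⁅incl a, incl b⁆)
    (ρ : L →ₗ⁅k⁆ Module.End k (UniversalEnvelopingAlgebra k M))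
    (hρ₁ : ∀ (a : M) (u : UniversalEnvelopingAlgebra k M),
      ρ (incl a) u = UniversalEnvelopingAlgebra.ι k a * u)
    (hρ₂ : ∀ h ∈ H, ρ h (1 : UniversalEnvelopingAlgebra k M) = 0)
    (hρ₃ : ∀ h ∈ H, ∀ u v : UniversalEnvelopingAlgebra k M,
      ρ h (u * v) = ρ h u * v + u * ρ h v)
    (hρ₄ : ∀ h ∈ H, ∀ a b : M, incl b = πN ⁅h, incl a⁆ →
      ρ h (UniversalEnvelopingAlgebra.ι k a) = UniversalEnvelopingAlgebra.ι k b)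
    (V : Type*) [AddCommGroup V] [Module k V]
    (ρV : L →ₗ⁅k⁆ Module.End k V) :
    (∀ f : UniversalEnvelopingAlgebra k M →ₗ[k] V,
        (∀ (a : L) (u : UniversalEnvelopingAlgebra k M), f (ρ a u) = ρV a (f u)) →
        ∀ h ∈ H, ρV h (f 1) = 0) ∧
    (∀ f g : UniversalEnvelopingAlgebra k M →ₗ[k] V,
        (∀ (a : L) (u : UniversalEnvelopingAlgebra k M), f (ρ a u) = ρV a (f u)) →
        (∀ (a : L) (u : UniversalEnvelopingAlgebra k M), g (ρ a u) = ρV a (g u)) →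
        f 1 = g 1 → f = g) ∧
    (∀ v : V, (∀ h ∈ H, ρV h v = 0) →
        ∃ f : UniversalEnvelopingAlgebra k M →ₗ[k] V,
          (∀ (a : L) (u : UniversalEnvelopingAlgebra k M), f (ρ a u) = ρV a (f u)) ∧
          f 1 = v) :=
  stmt_12_general k L H N hcompl πH πN hπH hπN hsum hHN htame M incl hrange hbr ρ hρ₁ hρ₂ hρ₃ hρ₄ V
    ρV
end

section
/- Let (𝔤, 𝔥, 𝔫) be a tame triplet and ρ an induced-type 𝔤-module structure on U(𝔫_α). Let ρ̄ : U(𝔤) → End_k(U(𝔫_α)) be the algebra homomorphism induced by ρ via the universal property of U(𝔤), and define φ : U(𝔤) → U(𝔫_α) by φ(u) = ρ̄(u)(1). Then φ is surjective, and its kernel equals the left ideal of U(𝔤) generated by ι_𝔤(𝔥), i.e. the k-span of the elements u·ι_𝔤(h) with u ∈ U(𝔤) and h ∈ 𝔥, where ι_𝔤 : 𝔤 → U(𝔤) is the canonical map. -/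
/-!
Write `S ⊆ U(𝔤)` for the subalgebra generated by `ι(𝔫)` and `J` for the left ideal generated by
`ι(𝔥)`. Since `𝔤 = 𝔥 + 𝔫`, a PBW-type straightening gives `U(𝔤) = S + J`. On `S` the operator
`ρ̄(s)` is left multiplication by `φ(s)`, so `φ` is multiplicative there and hits the generators
`ι(𝔫)`, whence surjectivity; and `φ(J) = 0` because `ρ(h)(1) = 0`.

For the kernel, let `U(𝔫_α)` act on `U(𝔤)/J` through left multiplication by `ι(x)`, `x ∈ 𝔫`. This
is a Lie action because `[x, y] - α(x, y) = π_𝔥([x, y])` lies in `𝔥` and, by tameness, commutes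
with `𝔫`, hence with `S`, so it kills `U(𝔤)/J = (S + J)/J`. The resulting map `ψ` satisfies
`ψ(φ(s)) · [1] = [s]` for `s ∈ S`, so `φ(s + j) = 0` forces `s ∈ J`.
-/

open UniversalEnvelopingAlgebra

attribute [local instance 100] LieRing.ofAssociativeRing

theorem Ideal.restrictScalars_span_eq_span_mul (R : Type*) {A : Type*} [CommSemiring R]
    [Semiring A] [Algebra R A] (s : Set A) :
    (Ideal.span s).restrictScalars R = Submodule.span R {x | ∃ u, ∃ a ∈ s, x = u * a} := by
  set T := Submodule.span R {x | ∃ u, ∃ a ∈ s, x = u * a}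
  have hT : ∀ u : A, ∀ x ∈ T, u * x ∈ T := by
    intro u x hx
    induction hx using Submodule.span_induction with
    | mem y hy =>
      obtain ⟨v, a, ha, rfl⟩ := hy
      exact Submodule.subset_span ⟨u * v, a, ha, (mul_assoc u v a).symm⟩
    | zero => rw [mul_zero]; exact zero_mem _
    | add x y _ _ hx hy => rw [mul_add]; exact add_mem hx hy
    | smul r x _ hx => rw [mul_smul_comm]; exact T.smul_mem r hx
  refine le_antisymm (fun w hw => ?_) (Submodule.span_le.2 ?_)
  · induction hw using Submodule.span_induction with
    | mem a ha => exact Submodule.subset_span ⟨1, a, ha, (one_mul a).symm⟩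
    | zero => exact zero_mem _
    | add x y _ _ hx hy => exact add_mem hx hy
    | smul u x _ hx => exact hT u x hx
  · rintro _ ⟨u, a, ha, rfl⟩
    exact Ideal.mul_mem_left _ u (Ideal.subset_span ha)

namespace UniversalEnvelopingAlgebra

variable {R : Type*} [CommRing R] {L : Type*} [LieRing L] [LieAlgebra R L]

theorem adjoin_range_ι :
    Algebra.adjoin R (Set.range (ι R : L → UniversalEnvelopingAlgebra R L)) = ⊤ := by
  have hrange : Set.range (ι R : L → UniversalEnvelopingAlgebra R L) =
      mkAlgHom R L '' Set.range (TensorAlgebra.ι R) := by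
    rw [← Set.range_comp]; rfl
  rw [hrange, ← AlgHom.map_adjoin, TensorAlgebra.adjoin_range_ι, Algebra.map_top,
    AlgHom.range_eq_top]
  exact RingCon.mkₐ_surjective (α := R) _

theorem mul_mem_of_forall_ι_mul_mem {Q : Submodule R (UniversalEnvelopingAlgebra R L)}
    (hQ : ∀ x : L, ∀ q ∈ Q, ι R x * q ∈ Q) (u : UniversalEnvelopingAlgebra R L) {q}
    (hq : q ∈ Q) : u * q ∈ Q := by
  have hu : u ∈ Algebra.adjoin R (Set.range (ι R : L → UniversalEnvelopingAlgebra R L)) := by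
    rw [adjoin_range_ι]; trivial
  induction hu using Algebra.adjoin_induction generalizing q with
  | mem _ hx => obtain ⟨x, rfl⟩ := hx; exact hQ x q hq
  | algebraMap r => rw [← Algebra.smul_def]; exact Q.smul_mem r hq
  | add u v _ _ hu hv => rw [add_mul]; exact add_mem (hu hq) (hv hq)
  | mul u v _ _ hu hv => rw [mul_assoc]; exact hu (hv hq)

theorem lift_mem_range_lmul_of_mem_adjoin {A : Type*} [Ring A]
    [Algebra R A] (g : L →ₗ⁅R⁆ Module.End R A) {T : Set L}
    (hT : ∀ x ∈ T, g x ∈ (Algebra.lmul R A).range) {s : UniversalEnvelopingAlgebra R L}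
    (hs : s ∈ Algebra.adjoin R (ι R '' T)) : lift R g s ∈ (Algebra.lmul R A).range := by
  refine Algebra.adjoin_le (S := (Algebra.lmul R A).range.comap (lift R g)) ?_ hs
  rintro _ ⟨x, hx, rfl⟩
  exact (Subalgebra.mem_comap _ _ _).2 (by rw [lift_ι_apply]; exact hT x hx)

variable {H N : Submodule R L}

theorem ι_mul_mem_adjoin_sup_ideal_span (hHN : H ⊔ N = ⊤) {h : L} (hh : h ∈ H)
    {s : UniversalEnvelopingAlgebra R L} (hs : s ∈ Algebra.adjoin R (ι R '' (N : Set L))) :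
    ι R h * s ∈ (Algebra.adjoin R (ι R '' (N : Set L))).toSubmodule ⊔
      (Ideal.span (ι R '' (H : Set L))).restrictScalars R := by
  set S := Algebra.adjoin R (ι R '' (N : Set L))
  -- `J` itself is not stable under right multiplication by `S`, but `S + S·ι(H)` is.
  set P := Submodule.span R ((S : Set _) ∪ {x | ∃ s ∈ S, ∃ h ∈ H, x = s * ι R h})
  have hSP : ∀ s ∈ S, s ∈ P := fun s hs => Submodule.subset_span (Or.inl hs)
  have hSHP : ∀ s ∈ S, ∀ h ∈ H, s * ι R h ∈ P :=
    fun s hs h hh => Submodule.subset_span (Or.inr ⟨s, hs, h, hh, rfl⟩)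
  have hιN : ∀ n ∈ N, ι R n ∈ S := fun n hn => Algebra.subset_adjoin ⟨n, hn, rfl⟩
  have hmul_ιN : ∀ n ∈ N, ∀ p ∈ P, p * ι R n ∈ P := by
    intro n hn p hp
    induction hp using Submodule.span_induction with
    | mem p hp =>
      rcases hp with hp | ⟨s, hs, h, hh, rfl⟩
      · exact hSP _ (mul_mem hp (hιN n hn))
      · obtain ⟨h', hh', n', hn', hdecomp⟩ :=
          Submodule.mem_sup.1 (hHN ▸ Submodule.mem_top : ⁅h, n⁆ ∈ H ⊔ N)
        have hcomm : ι R h * ι R n = ι R n * ι R h + ι R h' + ι R n' := by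
          rw [add_assoc, ← map_add, hdecomp, LieHom.map_lie, Ring.lie_def]; abel
        rw [mul_assoc, hcomm, mul_add, mul_add, ← mul_assoc]
        exact add_mem (add_mem (hSHP _ (mul_mem hs (hιN n hn)) h hh) (hSHP s hs h' hh'))
          (hSP _ (mul_mem hs (hιN n' hn')))
    | zero => rw [zero_mul]; exact zero_mem _
    | add x y _ _ hx hy => rw [add_mul]; exact add_mem hx hy
    | smul r x _ hx => rw [smul_mul_assoc]; exact P.smul_mem r hx
  have hmul_S : ∀ p ∈ P, p * s ∈ P := by
    induction hs using Algebra.adjoin_induction with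
    | mem _ hx => obtain ⟨n, hn, rfl⟩ := hx; exact hmul_ιN n hn
    | algebraMap r =>
      intro p hp; rw [← Algebra.commutes, ← Algebra.smul_def]; exact P.smul_mem r hp
    | add u v _ _ hu hv => intro p hp; rw [mul_add]; exact add_mem (hu p hp) (hv p hp)
    | mul u v _ _ hu hv => intro p hp; rw [← mul_assoc]; exact hv _ (hu p hp)
  have hP : P ≤ S.toSubmodule ⊔ (Ideal.span (ι R '' (H : Set L))).restrictScalars R := by
    refine Submodule.span_le.2 (Set.union_subset (fun s hs => Submodule.mem_sup_left hs) ?_)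
    rintro _ ⟨s, -, h, hh, rfl⟩
    exact Submodule.mem_sup_right (Ideal.mul_mem_left _ s (Ideal.subset_span ⟨h, hh, rfl⟩))
  simpa using hP (hmul_S _ (hSHP 1 S.one_mem h hh))

theorem adjoin_sup_ideal_span_eq_top (hHN : H ⊔ N = ⊤) :
    (Algebra.adjoin R (ι R '' (N : Set L))).toSubmodule ⊔
      (Ideal.span (ι R '' (H : Set L))).restrictScalars R = ⊤ := by
  set S := Algebra.adjoin R (ι R '' (N : Set L))
  set I := Ideal.span (ι R '' (H : Set L))
  have hι_mul : ∀ (x : L), ∀ q ∈ S.toSubmodule ⊔ I.restrictScalars R,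
      ι R x * q ∈ S.toSubmodule ⊔ I.restrictScalars R := by
    intro x q hq
    obtain ⟨s, hs, j, hj, rfl⟩ := Submodule.mem_sup.1 hq
    obtain ⟨h, hh, n, hn, rfl⟩ := Submodule.mem_sup.1 (hHN ▸ Submodule.mem_top : x ∈ H ⊔ N)
    rw [mul_add, map_add, add_mul]
    refine add_mem (add_mem (ι_mul_mem_adjoin_sup_ideal_span hHN hh hs) ?_)
      (Submodule.mem_sup_right (I.mul_mem_left _ hj))
    exact Submodule.mem_sup_left (S.mul_mem (Algebra.subset_adjoin ⟨n, hn, rfl⟩) hs)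
  refine eq_top_iff.2 fun u _ => ?_
  simpa using mul_mem_of_forall_ι_mul_mem hι_mul u
    (Submodule.mem_sup_left ((Subalgebra.mem_toSubmodule S).2 S.one_mem))

theorem ι_mul_mem_ideal_span_of_forall_lie_eq_zero (hHN : H ⊔ N = ⊤) {z : L} (hz : z ∈ H)
    (hzN : ∀ n ∈ N, ⁅z, n⁆ = 0) (w : UniversalEnvelopingAlgebra R L) :
    ι R z * w ∈ Ideal.span (ι R '' (H : Set L)) := by
  have hw : w ∈ (⊤ : Submodule R _) := trivial
  rw [← adjoin_sup_ideal_span_eq_top hHN] at hw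
  obtain ⟨s, hs, j, hj, rfl⟩ := Submodule.mem_sup.1 hw
  have hcomm : Commute (ι R z) s := Algebra.commute_of_mem_adjoin_of_forall_mem_commute hs
    (by rintro _ ⟨n, hn, rfl⟩; rw [commute_iff_lie_eq, ← LieHom.map_lie, hzN n hn, map_zero])
  rw [mul_add, hcomm.eq]
  exact add_mem (Ideal.mul_mem_left _ s (Ideal.subset_span ⟨z, hz, rfl⟩))
    (Ideal.mul_mem_left _ _ hj)

end UniversalEnvelopingAlgebra

section InducedModule

variable {k : Type*} [CommRing k] {L : Type*} [LieRing L] [LieAlgebra k L]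
  {M : Type*} [LieRing M] [LieAlgebra k M]

def quotientAction (incl : M →ₗ[k] L) (I : Ideal (UniversalEnvelopingAlgebra k L))
    (hI : ∀ a b w, ι k (⁅incl a, incl b⁆ - incl ⁅a, b⁆) * w ∈ I) :
    M →ₗ⁅k⁆ Module.End k (UniversalEnvelopingAlgebra k L ⧸ I) :=
  { (Algebra.lsmul k k _).toLinearMap ∘ₗ
      (ι k : L →ₗ⁅k⁆ UniversalEnvelopingAlgebra k L).toLinearMap ∘ₗ incl with
    map_lie' := fun {a b} => by
      refine LinearMap.ext fun q => ?_
      obtain ⟨w, rfl⟩ := Submodule.Quotient.mk_surjective I q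
      have h := hI a b w
      rw [map_sub, LieHom.map_lie, Ring.lie_def] at h
      simp only [LinearMap.toFun_eq_coe, LinearMap.coe_comp, Function.comp_apply,
        AlgHom.toLinearMap_apply, LieHom.coe_toLinearMap, Ring.lie_def, LinearMap.sub_apply,
        Module.End.mul_apply, Algebra.lsmul_coe, ← Submodule.Quotient.mk_smul,
        ← Submodule.Quotient.mk_sub, smul_eq_mul, Submodule.Quotient.eq]
      convert I.neg_mem h using 1
      noncomm_ring }

variable {incl : M →ₗ[k] L} {ρ : L →ₗ⁅k⁆ Module.End k (UniversalEnvelopingAlgebra k M)}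

theorem lift_mul_apply_one (hρ : ∀ a u, ρ (incl a) u = ι k a * u)
    {s : UniversalEnvelopingAlgebra k L}
    (hs : s ∈ Algebra.adjoin k (ι k '' (LinearMap.range incl : Set L)))
    (u : UniversalEnvelopingAlgebra k L) :
    lift k ρ (s * u) 1 = lift k ρ s 1 * lift k ρ u 1 := by
  obtain ⟨a, ha⟩ := (AlgHom.mem_range _).1 <| lift_mem_range_lmul_of_mem_adjoin ρ
    (by rintro _ ⟨a, rfl⟩; exact ⟨ι k a, LinearMap.ext fun u => (hρ a u).symm⟩) hs
  rw [map_mul, Module.End.mul_apply, ← ha]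
  simp [Algebra.coe_lmul_eq_mul]

theorem lift_apply_one_surjective (hρ : ∀ a u, ρ (incl a) u = ι k a * u) :
    Function.Surjective fun u : UniversalEnvelopingAlgebra k L => lift k ρ u 1 := by
  intro m
  have hm : m ∈ Algebra.adjoin k (Set.range (ι k : M → UniversalEnvelopingAlgebra k M)) := by
    rw [adjoin_range_ι]; trivial
  suffices ∃ s ∈ Algebra.adjoin k (ι k '' (LinearMap.range incl : Set L)), lift k ρ s 1 = m by
    obtain ⟨s, -, hs⟩ := this; exact ⟨s, hs⟩
  induction hm using Algebra.adjoin_induction with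
  | mem _ hx =>
    obtain ⟨a, rfl⟩ := hx
    exact ⟨ι k (incl a), Algebra.subset_adjoin ⟨incl a, ⟨a, rfl⟩, rfl⟩, by
      rw [lift_ι_apply, hρ, mul_one]⟩
  | algebraMap r =>
    exact ⟨algebraMap k _ r, Subalgebra.algebraMap_mem _ r, by
      rw [AlgHom.commutes, Module.algebraMap_end_apply, Algebra.algebraMap_eq_smul_one]⟩
  | add _ _ _ _ hx hy =>
    obtain ⟨s, hs, rfl⟩ := hx
    obtain ⟨t, ht, rfl⟩ := hy
    exact ⟨s + t, add_mem hs ht, by rw [map_add, LinearMap.add_apply]⟩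
  | mul _ _ _ _ hx hy =>
    obtain ⟨s, hs, rfl⟩ := hx
    obtain ⟨t, ht, rfl⟩ := hy
    exact ⟨s * t, mul_mem hs ht, lift_mul_apply_one hρ hs t⟩

theorem lift_quotientAction_lift_apply_one (hρ : ∀ a u, ρ (incl a) u = ι k a * u)
    {I : Ideal (UniversalEnvelopingAlgebra k L)}
    (hI : ∀ a b w, ι k (⁅incl a, incl b⁆ - incl ⁅a, b⁆) * w ∈ I)
    {s : UniversalEnvelopingAlgebra k L}
    (hs : s ∈ Algebra.adjoin k (ι k '' (LinearMap.range incl : Set L))) :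
    lift k (quotientAction incl I hI) (lift k ρ s 1) = Algebra.lsmul k k _ s := by
  induction hs using Algebra.adjoin_induction with
  | mem _ hx =>
    obtain ⟨_, ⟨a, rfl⟩, rfl⟩ := hx
    rw [lift_ι_apply, hρ, mul_one, lift_ι_apply]
    rfl
  | algebraMap r =>
    rw [AlgHom.commutes, Module.algebraMap_end_apply, ← Algebra.algebraMap_eq_smul_one,
      AlgHom.commutes, AlgHom.commutes]
  | add s t _ _ hs ht => rw [map_add, LinearMap.add_apply, map_add, hs, ht, map_add]
  | mul s t hs _ ihs iht => rw [lift_mul_apply_one hρ hs, map_mul, ihs, iht, map_mul]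

theorem lift_apply_one_eq_zero_of_mem_ideal_span {H : Set L} (hρH : ∀ h ∈ H, ρ h 1 = 0)
    {w : UniversalEnvelopingAlgebra k L} (hw : w ∈ Ideal.span (ι k '' H)) :
    lift k ρ w 1 = 0 := by
  induction hw using Submodule.span_induction with
  | mem _ hx => obtain ⟨h, hh, rfl⟩ := hx; rw [lift_ι_apply, hρH h hh]
  | zero => rw [map_zero, LinearMap.zero_apply]
  | add x y _ _ hx hy => rw [map_add, LinearMap.add_apply, hx, hy, add_zero]
  | smul u x _ hx => rw [smul_eq_mul, map_mul, Module.End.mul_apply, hx, map_zero]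

theorem mem_ideal_span_of_lift_apply_one_eq_zero {H : Submodule k L}
    (hHN : H ⊔ LinearMap.range incl = ⊤) (hρ : ∀ a u, ρ (incl a) u = ι k a * u)
    (hρH : ∀ h ∈ H, ρ h 1 = 0)
    (hI : ∀ a b w, ι k (⁅incl a, incl b⁆ - incl ⁅a, b⁆) * w ∈ Ideal.span (ι k '' (H : Set L)))
    {w : UniversalEnvelopingAlgebra k L} (hw : lift k ρ w 1 = 0) :
    w ∈ Ideal.span (ι k '' (H : Set L)) := by
  obtain ⟨s, hs, j, hj, rfl⟩ :=
    Submodule.mem_sup.1 (adjoin_sup_ideal_span_eq_top hHN ▸ Submodule.mem_top : w ∈ _)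
  rw [map_add, LinearMap.add_apply, lift_apply_one_eq_zero_of_mem_ideal_span hρH hj,
    add_zero] at hw
  have hs0 := congr($(lift_quotientAction_lift_apply_one hρ hI hs) (Submodule.Quotient.mk 1))
  rw [hw, map_zero, LinearMap.zero_apply, Algebra.lsmul_coe] at hs0
  beta_reduce at hs0
  rw [← Submodule.Quotient.mk_smul, smul_eq_mul, mul_one, eq_comm,
    Submodule.Quotient.mk_eq_zero] at hs0
  exact add_mem hs0 hj

end InducedModule

theorem stmt_14_general (k : Type*) [Field k] (L : Type*) [LieRing L] [LieAlgebra k L]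
    (H : LieSubalgebra k L) (N : Submodule k L)
    (hcompl : IsCompl H.toSubmodule N)
    (πH πN : L →ₗ[k] L)
    (hπH : ∀ x : L, πH x ∈ H)
    (hsum : ∀ x : L, πH x + πN x = x)
    (htame : ∀ x ∈ N, ∀ y ∈ N, ∀ z ∈ N, ⁅πH ⁅x, y⁆, z⁆ = (0 : L))
    (M : Type*) [LieRing M] [LieAlgebra k M]
    (incl : M →ₗ[k] L)
    (hrange : LinearMap.range incl = N)
    (hbr : ∀ a b : M, incl ⁅a, b⁆ = πN ⁅incl a, incl b⁆)
    (ρ : L →ₗ⁅k⁆ Module.End k (UniversalEnvelopingAlgebra k M))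
    (hρ₁ : ∀ (a : M) (u : UniversalEnvelopingAlgebra k M),
      ρ (incl a) u = UniversalEnvelopingAlgebra.ι k a * u)
    (hρ₂ : ∀ h ∈ H, ρ h (1 : UniversalEnvelopingAlgebra k M) = 0) :
    Function.Surjective
        (fun u : UniversalEnvelopingAlgebra k L =>
          (UniversalEnvelopingAlgebra.lift k ρ u) (1 : UniversalEnvelopingAlgebra k M)) ∧
      ∀ w : UniversalEnvelopingAlgebra k L,
        (UniversalEnvelopingAlgebra.lift k ρ w) (1 : UniversalEnvelopingAlgebra k M) = 0 ↔
          w ∈ Submodule.span k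
            {x : UniversalEnvelopingAlgebra k L |
              ∃ u : UniversalEnvelopingAlgebra k L, ∃ h ∈ H,
                x = u * UniversalEnvelopingAlgebra.ι k h} := by
  subst hrange
  have hdefect (a b : M) : ⁅incl a, incl b⁆ - incl ⁅a, b⁆ = πH ⁅incl a, incl b⁆ := by
    rw [hbr, sub_eq_iff_eq_add, hsum]
  have hI (a b : M) (w : UniversalEnvelopingAlgebra k L) :
      ι k (⁅incl a, incl b⁆ - incl ⁅a, b⁆) * w ∈
        Ideal.span (ι k '' (H.toSubmodule : Set L)) := by
    rw [hdefect]
    exact ι_mul_mem_ideal_span_of_forall_lie_eq_zero hcompl.sup_eq_top (hπH _)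
      (fun n hn => htame _ ⟨a, rfl⟩ _ ⟨b, rfl⟩ n hn) w
  have hspan : Submodule.span k {x | ∃ u, ∃ h ∈ H, x = u * ι k h} =
      (Ideal.span (ι k '' (H.toSubmodule : Set L))).restrictScalars k := by
    rw [Ideal.restrictScalars_span_eq_span_mul]
    congr 1
    ext
    simp
  refine ⟨lift_apply_one_surjective hρ₁, fun w => ?_⟩
  rw [hspan, Submodule.restrictScalars_mem]
  exact ⟨mem_ideal_span_of_lift_apply_one_eq_zero hcompl.sup_eq_top hρ₁ hρ₂ hI,
    lift_apply_one_eq_zero_of_mem_ideal_span hρ₂⟩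

/-- Let `(L, H, N)` be a tame triplet, `M` a Lie algebra realizing `N` with
the bracket `α` (as in Statement 11), and `ρ` an induced-type `L`-module structure on `U(M)`.
Let `ρ̄ : U(L) → End_k(U(M))` be the algebra homomorphism induced by `ρ` and define
`φ : U(L) → U(M)` by `φ(u) = ρ̄(u)(1)`.  Then `φ` is surjective and its kernel is the left
ideal of `U(L)` generated by `ι(H)`, i.e. the `k`-span of the elements `u·ι(h)`, `u ∈ U(L)`,
`h ∈ H`. -/
theorem stmt_14 (k : Type*) [Field k] [CharZero k] (L : Type*) [LieRing L] [LieAlgebra k L]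
    (H : LieSubalgebra k L) (N : Submodule k L)
    (hcompl : IsCompl H.toSubmodule N)
    (πH πN : L →ₗ[k] L)
    (hπH : ∀ x : L, πH x ∈ H) (hπN : ∀ x : L, πN x ∈ N)
    (hsum : ∀ x : L, πH x + πN x = x)
    (hHN : ∀ h ∈ H, ∀ x ∈ N, ⁅h, x⁆ ∈ N)
    (htame : ∀ x ∈ N, ∀ y ∈ N, ∀ z ∈ N, ⁅πH ⁅x, y⁆, z⁆ = (0 : L))
    (M : Type*) [LieRing M] [LieAlgebra k M]
    (incl : M →ₗ[k] L) (hinj : Function.Injective incl)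
    (hrange : LinearMap.range incl = N)
    (hbr : ∀ a b : M, incl ⁅a, b⁆ = πN ⁅incl a, incl b⁆)
    (ρ : L →ₗ⁅k⁆ Module.End k (UniversalEnvelopingAlgebra k M))
    (hρ₁ : ∀ (a : M) (u : UniversalEnvelopingAlgebra k M),
      ρ (incl a) u = UniversalEnvelopingAlgebra.ι k a * u)
    (hρ₂ : ∀ h ∈ H, ρ h (1 : UniversalEnvelopingAlgebra k M) = 0)
    (hρ₃ : ∀ h ∈ H, ∀ u v : UniversalEnvelopingAlgebra k M,
      ρ h (u * v) = ρ h u * v + u * ρ h v)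
    (hρ₄ : ∀ h ∈ H, ∀ a b : M, incl b = πN ⁅h, incl a⁆ →
      ρ h (UniversalEnvelopingAlgebra.ι k a) = UniversalEnvelopingAlgebra.ι k b) :
    Function.Surjective
        (fun u : UniversalEnvelopingAlgebra k L =>
          (UniversalEnvelopingAlgebra.lift k ρ u) (1 : UniversalEnvelopingAlgebra k M)) ∧
      ∀ w : UniversalEnvelopingAlgebra k L,
        (UniversalEnvelopingAlgebra.lift k ρ w) (1 : UniversalEnvelopingAlgebra k M) = 0 ↔
          w ∈ Submodule.span k
            {x : UniversalEnvelopingAlgebra k L |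
              ∃ u : UniversalEnvelopingAlgebra k L, ∃ h ∈ H,
                x = u * UniversalEnvelopingAlgebra.ι k h} :=
  stmt_14_general k L H N hcompl πH πN hπH hsum htame M incl hrange hbr ρ hρ₁ hρ₂
end

section
/- Under Assumptions (A1) and (A2): for all x, y ∈ V there exists a unique element b(x, y) ∈ V such that Δ(ι(x))·Δ(ι(y)) − Δ(ι(y))·Δ(ι(x)) = Δ(ι(b(x, y))); moreover the map (x, y) ↦ b(x, y) is k-bilinear, alternating, and satisfies the Jacobi identity, hence defines a Lie algebra bracket on V. -/
/-!
Since `Δ` is injective on `S ⊇ ι(V)`, the linear map `Δ ∘ ι` is injective. For `p = 1`,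
(A2) says that half of the commutator `[Δ(ι x), Δ(ι y)]` lies in `Δ(k·1 + ι(V))`; the
augmentation vanishes on commutators and on `Δ(ι(V))`, so the scalar part is zero and the
commutator is `Δ(ι c)` for a unique `c =: b(x, y)`. Bilinearity, alternation and the Jacobi
identity of `b` are then pulled back from the commutator bracket of `A` along `Δ ∘ ι`.
-/

/-- `Sym_n ⊆ T(V)`: the `k`-span of the symmetrized tensor monomials
`Σ_{s ∈ S_n} ι(v_{s(1)})⋯ι(v_{s(n)})` with `v₁,…,vₙ ∈ V`. -/
noncomputable def symSubmodule (k : Type*) [Field k] (V : Type*) [AddCommGroup V] [Module k V]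
    (n : ℕ) : Submodule k (TensorAlgebra k V) :=
  Submodule.span k
    {u : TensorAlgebra k V | ∃ v : Fin n → V,
      u = ∑ s : Equiv.Perm (Fin n),
        (List.ofFn fun i : Fin n => TensorAlgebra.ι k (v (s i))).prod}

open TensorAlgebra

theorem Set.injOn_of_forall_existsUnique {α β : Type*} {f : α → β} {s : Set α}
    (h : ∀ b, ∃! a, a ∈ s ∧ f a = b) : s.InjOn f :=
  fun _ ha _ ha' he => (h _).unique ⟨ha, he⟩ ⟨ha', rfl⟩

theorem sum_perm_fin_two_prod_ofFn {M R : Type*} [Semiring R] (φ : M → R) (v : Fin 2 → M) :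
    ∑ s : Equiv.Perm (Fin 2), (List.ofFn fun i => φ (v (s i))).prod
      = φ (v 0) * φ (v 1) + φ (v 1) * φ (v 0) := by
  rw [show (Finset.univ : Finset (Equiv.Perm (Fin 2))) = {1, Equiv.swap 0 1} by decide,
    Finset.sum_pair (by decide)]
  simp [List.ofFn_succ]

section BracketOfInjective

variable {k V A : Type*} [CommRing k] [AddCommGroup V] [Module k V] [Ring A] [Algebra k A]
  {f : V →ₗ[k] A} (hf : Function.Injective f) {b : V → V → V}
  (hb : ∀ x y, f x * f y - f y * f x = f (b x y))
include hf hb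

theorem eq_bracket_of_commutator_eq {x y c : V} (h : f x * f y - f y * f x = f c) : c = b x y :=
  hf (h.symm.trans (hb x y))

theorem bracket_smul_add_left (c : k) (x x' y : V) :
    b (c • x + x') y = c • b x y + b x' y := by
  refine (eq_bracket_of_commutator_eq hf hb ?_).symm
  simp only [map_add, map_smul, ← hb, add_mul, mul_add, smul_mul_assoc, mul_smul_comm, smul_sub]
  abel

theorem bracket_smul_add_right (c : k) (x y y' : V) :
    b x (c • y + y') = c • b x y + b x y' := by
  refine (eq_bracket_of_commutator_eq hf hb ?_).symm
  simp only [map_add, map_smul, ← hb, add_mul, mul_add, smul_mul_assoc, mul_smul_comm, smul_sub]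
  abel

theorem bracket_self (x : V) : b x x = 0 :=
  (eq_bracket_of_commutator_eq hf hb (by simp)).symm

theorem bracket_jacobi (x y z : V) : b (b x y) z + b (b y z) x + b (b z x) y = 0 :=
  hf <| by
    simp only [map_add, map_zero, ← hb]
    noncomm_ring

end BracketOfInjective

section Symmetrization

variable (k : Type*) [Field k] (V : Type*) [AddCommGroup V] [Module k V]

theorem ι_mem_symSubmodule_one (x : V) : ι k x ∈ symSubmodule k V 1 :=
  Submodule.subset_span ⟨fun _ => x, by simp⟩

theorem iSup_symSubmodule_le_one :
    (⨆ m, ⨆ _ : m ≤ 1, symSubmodule k V m)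
      ≤ Submodule.span k {1} ⊔ LinearMap.range (ι k) := by
  refine iSup₂_le fun m hm => Submodule.span_le.2 ?_
  rintro _ ⟨v, rfl⟩
  interval_cases m
  · exact Submodule.mem_sup_left (by simp [Submodule.mem_span_singleton_self])
  · exact Submodule.mem_sup_right ⟨v 0, by simp⟩

variable {k V} {A : Type*} [Ring A] [Algebra k A] (Δ : TensorAlgebra k V →ₐ[k] A)

theorem commutator_mem_map_iSup_symSubmodule_le_one [CharZero k]
    (hA2 : ∀ v : Fin 2 → V,
      Δ ((List.ofFn fun i : Fin 2 => ι k (v i)).prod)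
          - algebraMap ℚ k ((Nat.factorial 2 : ℚ)⁻¹) •
              ∑ s : Equiv.Perm (Fin 2), Δ ((List.ofFn fun i : Fin 2 => ι k (v (s i))).prod)
        ∈ Submodule.map Δ.toLinearMap (⨆ m, ⨆ _ : m ≤ 1, symSubmodule k V m))
    (x y : V) :
    Δ (ι k x) * Δ (ι k y) - Δ (ι k y) * Δ (ι k x)
      ∈ Submodule.map Δ.toLinearMap (⨆ m, ⨆ _ : m ≤ 1, symSubmodule k V m) := by
  have h := Submodule.smul_mem _ (2 : k) (hA2 ![x, y])
  rw [← map_sum, sum_perm_fin_two_prod_ofFn] at h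
  have two_mul_inv : (2 : k) * algebraMap ℚ k ((Nat.factorial 2 : ℚ)⁻¹) = 1 := by
    rw [← map_ofNat (algebraMap ℚ k) 2, ← map_mul]
    norm_num [Nat.factorial]
  convert h using 1
  simp only [List.ofFn_succ, List.ofFn_zero, List.prod_cons, List.prod_nil, mul_one,
    Fin.succ_zero_eq_one, Matrix.cons_val_zero, Matrix.cons_val_one, smul_sub, smul_smul,
    two_mul_inv, one_smul, map_add, map_mul, two_smul]
  abel

theorem exists_eq_ι_of_mem_map_iSup_symSubmodule_le_one (ε : A →ₐ[k] k)
    (hε : ∀ v : V, ε (Δ (ι k v)) = 0) {a : A}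
    (ha : a ∈ Submodule.map Δ.toLinearMap (⨆ m, ⨆ _ : m ≤ 1, symSubmodule k V m))
    (hεa : ε a = 0) : ∃ c, a = Δ (ι k c) := by
  obtain ⟨t, ht, rfl⟩ := ha
  obtain ⟨_, hr, _, ⟨c, rfl⟩, rfl⟩ := Submodule.mem_sup.mp (iSup_symSubmodule_le_one k V ht)
  obtain ⟨r, rfl⟩ := Submodule.mem_span_singleton.mp hr
  have hr : r = 0 := by simpa [hε] using hεa
  exact ⟨c, by simp [hr]⟩

end Symmetrization

/-- Let `k` be a field of characteristic zero, `V` a `k`-vector space,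
`A` a unital associative `k`-algebra with augmentation `ε : A → k` and an algebra map
`Δ : T(V) → A` with `ε(Δ(ι v)) = 0`.  Under Assumption (A1) (the restriction of `Δ` to
`S = Σ_n Sym_n` is a bijection onto `A`) and Assumption (A2) (for `p ≥ 1`, the difference
between `Δ(ι(v₁)⋯ι(v_p))` and its symmetrization lies in `Δ(S^{≤ p−1})`): for all `x, y ∈ V`
there is a unique `b(x,y) ∈ V` with `Δ(ι x)·Δ(ι y) − Δ(ι y)·Δ(ι x) = Δ(ι(b(x,y)))`; moreover
`b` is `k`-bilinear, alternating and satisfies the Jacobi identity, hence is a Lie bracket. -/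
theorem stmt_15 (k : Type*) [Field k] [CharZero k] (V : Type*) [AddCommGroup V] [Module k V]
    (A : Type*) [Ring A] [Algebra k A]
    (ε : A →ₐ[k] k) (Δ : TensorAlgebra k V →ₐ[k] A)
    (hε : ∀ v : V, ε (Δ (TensorAlgebra.ι k v)) = 0)
    (hA1 : ∀ a : A, ∃! s : TensorAlgebra k V,
      s ∈ (⨆ n : ℕ, symSubmodule k V n) ∧ Δ s = a)
    (hA2 : ∀ (p : ℕ) (v : Fin (p + 1) → V),
      Δ ((List.ofFn fun i : Fin (p + 1) => TensorAlgebra.ι k (v i)).prod)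
          - algebraMap ℚ k ((Nat.factorial (p + 1) : ℚ)⁻¹) •
              ∑ s : Equiv.Perm (Fin (p + 1)),
                Δ ((List.ofFn fun i : Fin (p + 1) => TensorAlgebra.ι k (v (s i))).prod)
        ∈ Submodule.map Δ.toLinearMap (⨆ m, ⨆ _ : m ≤ p, symSubmodule k V m)) :
    ∃ b : V → V → V,
      (∀ x y : V,
        Δ (TensorAlgebra.ι k x) * Δ (TensorAlgebra.ι k y)
            - Δ (TensorAlgebra.ι k y) * Δ (TensorAlgebra.ι k x)
          = Δ (TensorAlgebra.ι k (b x y))) ∧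
      (∀ x y c : V,
        Δ (TensorAlgebra.ι k x) * Δ (TensorAlgebra.ι k y)
            - Δ (TensorAlgebra.ι k y) * Δ (TensorAlgebra.ι k x)
          = Δ (TensorAlgebra.ι k c) → c = b x y) ∧
      (∀ (c : k) (x x' y : V), b (c • x + x') y = c • b x y + b x' y) ∧
      (∀ (c : k) (x y y' : V), b x (c • y + y') = c • b x y + b x y') ∧
      (∀ x : V, b x x = 0) ∧
      (∀ x y z : V, b (b x y) z + b (b y z) x + b (b z x) y = 0) := by
  have mem_sym : ∀ x, ι k x ∈ ⨆ n, symSubmodule k V n :=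
    fun x => Submodule.mem_iSup_of_mem 1 (ι_mem_symSubmodule_one k V x)
  have hf : Function.Injective (Δ.toLinearMap ∘ₗ ι k) := fun u v h =>
    ι_leftInverse.injective (Set.injOn_of_forall_existsUnique hA1 (mem_sym u) (mem_sym v) h)
  have hclosed : ∀ x y : V, ∃ c,
      Δ (ι k x) * Δ (ι k y) - Δ (ι k y) * Δ (ι k x) = Δ (ι k c) := fun x y =>
    exists_eq_ι_of_mem_map_iSup_symSubmodule_le_one Δ ε hε
      (commutator_mem_map_iSup_symSubmodule_le_one Δ (hA2 1) x y) (by simp [hε])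
  choose b hb using hclosed
  exact ⟨b, hb, fun _ _ _ h => eq_bracket_of_commutator_eq hf hb h, bracket_smul_add_left hf hb,
    bracket_smul_add_right hf hb, bracket_self hf hb, bracket_jacobi hf hb⟩
end

section
/- Under Assumptions (A1) and (A2), the pair (A, Δ∘ι) is a universal enveloping algebra of the Lie algebra (V, b), where b is the Lie bracket on V determined by Δ(ι(x))·Δ(ι(y)) − Δ(ι(y))·Δ(ι(x)) = Δ(ι(b(x, y))): for every unital associative k-algebra B and every k-linear map f : V → B satisfying f(b(x, y)) = f(x)·f(y) − f(y)·f(x) for all x, y ∈ V, there exists a unique k-algebra homomorphism g : A → B such that g(Δ(ι(x))) = f(x) for all x ∈ V. -/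
section Aux

variable (k : Type*) [Field k] (V : Type*) [AddCommGroup V] [Module k V]

/-- Span of tensor monomials of length `< n`. -/
noncomputable def mltAux (n : ℕ) : Submodule k (TensorAlgebra k V) :=
  Submodule.span k
    {u | ∃ l : List V, l.length < n ∧ u = (l.map (TensorAlgebra.ι k)).prod}

variable {k V}

lemma mul_mem_mltAux (x : V) {n : ℕ} {t : TensorAlgebra k V} (ht : t ∈ mltAux k V n) :
    TensorAlgebra.ι k x * t ∈ mltAux k V (n + 1) := by
  induction ht using Submodule.span_induction with
  | mem u hu =>
    obtain ⟨l, hl, rfl⟩ := hu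
    refine Submodule.subset_span ⟨x :: l, by simpa using hl, by simp⟩
  | zero => simpa using zero_mem _
  | add u w hu hw hu' hw' => simpa [mul_add] using add_mem hu' hw'
  | smul c u hu hu' => simpa [mul_smul_comm] using Submodule.smul_mem _ c hu'

variable {C : Type*} [Ring C] [Algebra k C]

lemma permDiffAux (Θ : TensorAlgebra k V →ₐ[k] C) (b : V → V → V)
    (hΘ : ∀ x y : V,
      Θ (TensorAlgebra.ι k x) * Θ (TensorAlgebra.ι k y)
          - Θ (TensorAlgebra.ι k y) * Θ (TensorAlgebra.ι k x)
        = Θ (TensorAlgebra.ι k (b x y)))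
    {l1 l2 : List V} (h : l1.Perm l2) :
    ∃ t ∈ mltAux k V l1.length,
      Θ ((l1.map (TensorAlgebra.ι k)).prod) - Θ ((l2.map (TensorAlgebra.ι k)).prod) = Θ t := by
  induction h with
  | nil => exact ⟨0, zero_mem _, by simp⟩
  | cons x h IH =>
    obtain ⟨t, ht, heq⟩ := IH
    refine ⟨TensorAlgebra.ι k x * t, mul_mem_mltAux x ht, ?_⟩
    simp only [List.map_cons, List.prod_cons, map_mul, ← mul_sub, heq]
  | swap x y l =>
    refine ⟨((b y x :: l).map (TensorAlgebra.ι k)).prod,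
      Submodule.subset_span ⟨b y x :: l, by simp, rfl⟩, ?_⟩
    simp only [List.map_cons, List.prod_cons, map_mul, ← mul_assoc, ← sub_mul, hΘ y x]
  | trans h12 h23 IH1 IH2 =>
    obtain ⟨t1, ht1, e1⟩ := IH1
    obtain ⟨t2, ht2, e2⟩ := IH2
    refine ⟨t1 + t2, add_mem ht1 (h12.length_eq ▸ ht2), ?_⟩
    rw [map_add, ← e1, ← e2]; abel

lemma keyAux [CharZero k] (Θ : TensorAlgebra k V →ₐ[k] C) (b : V → V → V)
    (hΘ : ∀ x y : V,
      Θ (TensorAlgebra.ι k x) * Θ (TensorAlgebra.ι k y)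
          - Θ (TensorAlgebra.ι k y) * Θ (TensorAlgebra.ι k x)
        = Θ (TensorAlgebra.ι k (b x y)))
    (t : TensorAlgebra k V) :
    ∃ s ∈ (⨆ n : ℕ, symSubmodule k V n), Θ s = Θ t := by
  classical
  have main : ∀ n (v : Fin n → V), ∃ s ∈ (⨆ n : ℕ, symSubmodule k V n),
      Θ s = Θ (((List.ofFn v).map (TensorAlgebra.ι k)).prod) := by
    intro n
    induction n using Nat.strong_induction_on with
    | _ n IH =>
    intro v
    -- IH in span form
    have IH' : ∀ t ∈ mltAux k V n, ∃ s ∈ (⨆ n : ℕ, symSubmodule k V n), Θ s = Θ t := by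
      intro t ht
      induction ht using Submodule.span_induction with
      | mem u hu =>
        obtain ⟨l, hl, rfl⟩ := hu
        obtain ⟨s, hs, he⟩ := IH l.length hl l.get
        exact ⟨s, hs, by rwa [List.ofFn_get] at he⟩
      | zero => exact ⟨0, zero_mem _, by simp⟩
      | add u w hu hw hu' hw' =>
        obtain ⟨s1, hs1, e1⟩ := hu'
        obtain ⟨s2, hs2, e2⟩ := hw'
        exact ⟨s1 + s2, add_mem hs1 hs2, by rw [map_add, map_add, e1, e2]⟩
      | smul c u hu hu' =>
        obtain ⟨s, hs, e⟩ := hu'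
        exact ⟨c • s, Submodule.smul_mem _ c hs, by rw [map_smul, map_smul, e]⟩
    have hdiff : ∀ σ : Equiv.Perm (Fin n), ∃ t ∈ mltAux k V n,
        Θ (((List.ofFn v).map (TensorAlgebra.ι k)).prod)
          - Θ (((List.ofFn (v ∘ σ)).map (TensorAlgebra.ι k)).prod) = Θ t := by
      intro σ
      obtain ⟨t, ht, e⟩ := permDiffAux Θ b hΘ (σ.ofFn_comp_perm v).symm
      rw [List.length_ofFn] at ht
      exact ⟨t, ht, e⟩
    choose tf htf hetf using hdiff
    have hsum : (n.factorial : k) • Θ (((List.ofFn v).map (TensorAlgebra.ι k)).prod)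
        = (∑ σ : Equiv.Perm (Fin n),
            Θ (((List.ofFn (v ∘ σ)).map (TensorAlgebra.ι k)).prod))
          + Θ (∑ σ : Equiv.Perm (Fin n), tf σ) := by
      rw [map_sum]
      have : ∀ σ : Equiv.Perm (Fin n),
          Θ (tf σ) = Θ (((List.ofFn v).map (TensorAlgebra.ι k)).prod)
            - Θ (((List.ofFn (v ∘ σ)).map (TensorAlgebra.ι k)).prod) := fun σ => (hetf σ).symm
      rw [Finset.sum_congr rfl (fun σ _ => this σ), Finset.sum_sub_distrib]
      rw [Finset.sum_const, Finset.card_univ, Fintype.card_perm, Fintype.card_fin,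
        Nat.cast_smul_eq_nsmul]
      abel
    obtain ⟨s', hs', he'⟩ := IH' _ (Submodule.sum_mem _ (fun σ _ => htf σ))
    set symE : TensorAlgebra k V := ∑ σ : Equiv.Perm (Fin n),
      (List.ofFn fun i : Fin n => TensorAlgebra.ι k (v (σ i))).prod with hsymE
    have hsymEmem : symE ∈ (⨆ n : ℕ, symSubmodule k V n) :=
      Submodule.mem_iSup_of_mem n (Submodule.subset_span ⟨v, rfl⟩)
    have hΘsymE : Θ symE = ∑ σ : Equiv.Perm (Fin n),
        Θ (((List.ofFn (v ∘ σ)).map (TensorAlgebra.ι k)).prod) := by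
      rw [hsymE, map_sum]
      refine Finset.sum_congr rfl fun σ _ => ?_
      rw [List.map_ofFn]
      rfl
    refine ⟨(n.factorial : k)⁻¹ • (symE + s'),
      Submodule.smul_mem _ _ (add_mem hsymEmem hs'), ?_⟩
    have hne : (n.factorial : k) ≠ 0 := Nat.cast_ne_zero.mpr n.factorial_ne_zero
    rw [map_smul, map_add, hΘsymE, he', ← hsum, smul_smul, inv_mul_cancel₀ hne, one_smul]
  -- all monomials span
  have hmono : t ∈ Submodule.span k
      {u : TensorAlgebra k V | ∃ l : List V, u = (l.map (TensorAlgebra.ι k)).prod} := by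
    have hmul : Submodule.span k
          {u : TensorAlgebra k V | ∃ l : List V, u = (l.map (TensorAlgebra.ι k)).prod}
        * Submodule.span k
          {u : TensorAlgebra k V | ∃ l : List V, u = (l.map (TensorAlgebra.ι k)).prod}
        ≤ Submodule.span k
          {u : TensorAlgebra k V | ∃ l : List V, u = (l.map (TensorAlgebra.ι k)).prod} := by
      rw [Submodule.span_mul_span]
      refine Submodule.span_mono ?_
      rintro u ⟨u1, ⟨l1, rfl⟩, u2, ⟨l2, rfl⟩, rfl⟩
      exact ⟨l1 ++ l2, by simp⟩
    induction t using TensorAlgebra.induction with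
    | algebraMap r =>
      rw [Algebra.algebraMap_eq_smul_one]
      exact Submodule.smul_mem _ r (Submodule.subset_span ⟨[], by simp⟩)
    | ι x => exact Submodule.subset_span ⟨[x], by simp⟩
    | mul a c ha hc => exact hmul (Submodule.mul_mem_mul ha hc)
    | add a c ha hc => exact add_mem ha hc
  induction hmono using Submodule.span_induction with
  | mem u hu =>
    obtain ⟨l, rfl⟩ := hu
    obtain ⟨s, hs, he⟩ := main l.length l.get
    exact ⟨s, hs, by rwa [List.ofFn_get] at he⟩
  | zero => exact ⟨0, zero_mem _, by simp⟩
  | add u w hu hw hu' hw' =>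
    obtain ⟨s1, hs1, e1⟩ := hu'
    obtain ⟨s2, hs2, e2⟩ := hw'
    exact ⟨s1 + s2, add_mem hs1 hs2, by rw [map_add, map_add, e1, e2]⟩
  | smul c u hu hu' =>
    obtain ⟨s, hs, e⟩ := hu'
    exact ⟨c • s, Submodule.smul_mem _ c hs, by rw [map_smul, map_smul, e]⟩

end Aux

/-- Under Assumptions (A1) and (A2) (as in Statement 15), the pair
`(A, Δ∘ι)` is a universal enveloping algebra of the Lie algebra `(V, b)`, where `b` is the
bracket determined by `Δ(ι x)·Δ(ι y) − Δ(ι y)·Δ(ι x) = Δ(ι(b(x,y)))`: for every unital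
associative `k`-algebra `B` and every `k`-linear map `f : V → B` with
`f(b(x,y)) = f(x)f(y) − f(y)f(x)`, there is a unique `k`-algebra homomorphism `g : A → B`
with `g(Δ(ι x)) = f(x)` for all `x ∈ V`. -/
theorem stmt_16 (k : Type*) [Field k] [CharZero k] (V : Type*) [AddCommGroup V] [Module k V]
    (A : Type*) [Ring A] [Algebra k A]
    (ε : A →ₐ[k] k) (Δ : TensorAlgebra k V →ₐ[k] A)
    (hε : ∀ v : V, ε (Δ (TensorAlgebra.ι k v)) = 0)
    (hA1 : ∀ a : A, ∃! s : TensorAlgebra k V,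
      s ∈ (⨆ n : ℕ, symSubmodule k V n) ∧ Δ s = a)
    (hA2 : ∀ (p : ℕ) (v : Fin (p + 1) → V),
      Δ ((List.ofFn fun i : Fin (p + 1) => TensorAlgebra.ι k (v i)).prod)
          - algebraMap ℚ k ((Nat.factorial (p + 1) : ℚ)⁻¹) •
              ∑ s : Equiv.Perm (Fin (p + 1)),
                Δ ((List.ofFn fun i : Fin (p + 1) => TensorAlgebra.ι k (v (s i))).prod)
        ∈ Submodule.map Δ.toLinearMap (⨆ m, ⨆ _ : m ≤ p, symSubmodule k V m))
    (b : V → V → V)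
    (hb : ∀ x y : V,
      Δ (TensorAlgebra.ι k x) * Δ (TensorAlgebra.ι k y)
          - Δ (TensorAlgebra.ι k y) * Δ (TensorAlgebra.ι k x)
        = Δ (TensorAlgebra.ι k (b x y)))
    (B : Type*) [Ring B] [Algebra k B] (f : V →ₗ[k] B)
    (hf : ∀ x y : V, f (b x y) = f x * f y - f y * f x) :
    ∃! g : A →ₐ[k] B, ∀ x : V, g (Δ (TensorAlgebra.ι k x)) = f x := by
  classical
  set F : TensorAlgebra k V →ₐ[k] B := TensorAlgebra.lift k f with hFdef
  have hFι : ∀ x : V, F (TensorAlgebra.ι k x) = f x := fun x => TensorAlgebra.lift_ι_apply f x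
  set Θ : TensorAlgebra k V →ₐ[k] (A × B) := Δ.prod F with hΘdef
  have hΘapp : ∀ t, Θ t = (Δ t, F t) := fun t => rfl
  have hΘ : ∀ x y : V,
      Θ (TensorAlgebra.ι k x) * Θ (TensorAlgebra.ι k y)
          - Θ (TensorAlgebra.ι k y) * Θ (TensorAlgebra.ι k x)
        = Θ (TensorAlgebra.ι k (b x y)) := by
    intro x y
    simp only [hΘapp, Prod.mk_mul_mk, Prod.mk_sub_mk, Prod.mk.injEq]
    exact ⟨hb x y, by rw [hFι, hFι, hFι, ← hf x y]⟩
  have key := keyAux Θ b hΘ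
  -- the unique preimage in S
  have hsfun : ∀ a : A, ((hA1 a).choose ∈ (⨆ n : ℕ, symSubmodule k V n))
      ∧ Δ (hA1 a).choose = a := (fun a => (hA1 a).choose_spec.1)
  have huniq : ∀ a : A, ∀ y, (y ∈ (⨆ n : ℕ, symSubmodule k V n) ∧ Δ y = a) →
      y = (hA1 a).choose := fun a => (hA1 a).choose_spec.2
  set g0 : A → B := fun a => F (hA1 a).choose with hg0def
  have star : ∀ t : TensorAlgebra k V, g0 (Δ t) = F t := by
    intro t
    obtain ⟨s, hs, he⟩ := key t
    rw [hΘapp, hΘapp, Prod.mk.injEq] at he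
    have h1 : s = (hA1 (Δ t)).choose := huniq (Δ t) s ⟨hs, he.1⟩
    rw [hg0def]
    simp only
    rw [← h1, he.2]
  have surjΔ : ∀ a : A, ∃ t, Δ t = a := fun a => ⟨(hA1 a).choose, (hsfun a).2⟩
  set g : A →ₐ[k] B :=
    { toFun := g0
      map_one' := by show g0 1 = 1; rw [← map_one Δ, star, map_one]
      map_mul' := by
        intro a1 a2
        obtain ⟨t1, rfl⟩ := surjΔ a1
        obtain ⟨t2, rfl⟩ := surjΔ a2
        show g0 (Δ t1 * Δ t2) = g0 (Δ t1) * g0 (Δ t2)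
        rw [← map_mul Δ, star, map_mul, star, star]
      map_zero' := by show g0 0 = 0; rw [← map_zero Δ, star, map_zero]
      map_add' := by
        intro a1 a2
        obtain ⟨t1, rfl⟩ := surjΔ a1
        obtain ⟨t2, rfl⟩ := surjΔ a2
        show g0 (Δ t1 + Δ t2) = g0 (Δ t1) + g0 (Δ t2)
        rw [← map_add Δ, star, map_add, star, star]
      commutes' := by
        intro r
        show g0 (algebraMap k A r) = algebraMap k B r
        rw [← Δ.commutes r, star, F.commutes] } with hgdef
  refine ⟨g, ?_, ?_⟩
  · intro x
    show g0 (Δ (TensorAlgebra.ι k x)) = f x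
    rw [star, hFι]
  · intro g' hg'
    have hcomp : g'.comp Δ = F := by
      refine TensorAlgebra.hom_ext (LinearMap.ext fun x => ?_)
      simp only [AlgHom.comp_toLinearMap, LinearMap.coe_comp, Function.comp_apply,
        AlgHom.toLinearMap_apply, AlgHom.coe_comp]
      rw [hg' x, hFι]
    ext a
    obtain ⟨t, rfl⟩ := surjΔ a
    have h2 : g' (Δ t) = F t := by
      rw [← hcomp]; rfl
    rw [h2]
    exact (star t).symm
end
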